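/- arXiv:1612.03164 — 6 statements merged into one kernel-verified Lean document; each statement's English description precedes it below -/
import Mathlib

section
/- Let P and Q be probability distributions on a product X × Y × Z of finite types, each satisfying the Markov factorization along the chain X → Y → Z; that is, for all x, y, z one has P(x,y,z)·P_Y(y) = P_{X,Y}(x,y)·P_{Y,Z}(y,z), and likewise for Q, where subscripts denote marginals. Then H²(P, Q) ≤ H²(P_{X,Y}, Q_{X,Y}) + H²(P_{Y,Z}, Q_{Y,Z}). -/
/-- Cauchy–Schwarz: `∑ √(f·g) ≤ √(∑f · ∑g)`. -/
lemma aux_cs {ι : Type*} [Fintype ι] (f g : ι → ℝ) (hf : ∀ i, 0 ≤ f i) (hg : ∀ i, 0 ≤ g i) :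
    ∑ i, Real.sqrt (f i * g i) ≤ Real.sqrt ((∑ i, f i) * (∑ i, g i)) := by
  rw [Real.sqrt_mul (Finset.sum_nonneg fun i _ => hf i)]
  calc ∑ i, Real.sqrt (f i * g i) = ∑ i, Real.sqrt (f i) * Real.sqrt (g i) := by
        simp_rw [Real.sqrt_mul (hf _)]
    _ ≤ _ := Real.sum_sqrt_mul_sqrt_le _ hf hg

lemma aux_key (a b r s : ℝ) (ha : 0 ≤ a) (hb : 0 ≤ b) (hs : 0 ≤ s)
    (har : a ≤ r) (hbr : b ≤ r) (h : r * s = a * b) : a + b ≤ r + s := by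
  rcases eq_or_lt_of_le (ha.trans har) with hr | hr
  · nlinarith
  · nlinarith [mul_nonneg (sub_nonneg.2 har) (sub_nonneg.2 hbr)]

/-- The squared Hellinger distance `H²(p,q) = 1 - ∑ₖ √(pₖ qₖ)` between two
probability mass functions on a finite type. -/
noncomputable def sqHellinger {α : Type*} [Fintype α] (p q : α → ℝ) : ℝ :=
  1 - ∑ k, Real.sqrt (p k * q k)

/-- **Squared Hellinger subadditivity for a three-node Markov chain.**
If `P` and `Q` are probability distributions on `X × Y × Z`, each satisfying the
Markov factorization along the chain `X → Y → Z` (expressed via marginals: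
`P(x,y,z)·P_Y(y) = P_{X,Y}(x,y)·P_{Y,Z}(y,z)` pointwise, and likewise for `Q`),
then `H²(P,Q) ≤ H²(P_{X,Y}, Q_{X,Y}) + H²(P_{Y,Z}, Q_{Y,Z})`. -/
theorem sqHellinger_subadditive_three_node_markov
    {X Y Z : Type*} [Fintype X] [Fintype Y] [Fintype Z]
    (P Q : X × Y × Z → ℝ)
    (hP0 : ∀ w, 0 ≤ P w) (hP1 : ∑ w, P w = 1)
    (hQ0 : ∀ w, 0 ≤ Q w) (hQ1 : ∑ w, Q w = 1)
    (hPmarkov : ∀ x y z,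
      P (x, y, z) * (∑ x', ∑ z', P (x', y, z')) =
        (∑ z', P (x, y, z')) * (∑ x', P (x', y, z)))
    (hQmarkov : ∀ x y z,
      Q (x, y, z) * (∑ x', ∑ z', Q (x', y, z')) =
        (∑ z', Q (x, y, z')) * (∑ x', Q (x', y, z))) :
    sqHellinger P Q ≤
      sqHellinger (fun xy : X × Y => ∑ z, P (xy.1, xy.2, z))
          (fun xy : X × Y => ∑ z, Q (xy.1, xy.2, z)) +
        sqHellinger (fun yz : Y × Z => ∑ x, P (x, yz.1, yz.2))
          (fun yz : Y × Z => ∑ x, Q (x, yz.1, yz.2)) := by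
  -- notation
  set PXY : X → Y → ℝ := fun x y => ∑ z, P (x, y, z) with hPXY
  set QXY : X → Y → ℝ := fun x y => ∑ z, Q (x, y, z) with hQXY
  set PYZ : Y → Z → ℝ := fun y z => ∑ x, P (x, y, z) with hPYZ
  set QYZ : Y → Z → ℝ := fun y z => ∑ x, Q (x, y, z) with hQYZ
  set PY : Y → ℝ := fun y => ∑ x, ∑ z, P (x, y, z) with hPY
  set QY : Y → ℝ := fun y => ∑ x, ∑ z, Q (x, y, z) with hQY
  -- pointwise sqrt identity from the Markov property
  have hsqrt : ∀ x y z,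
      Real.sqrt (PY y * QY y) * Real.sqrt (P (x, y, z) * Q (x, y, z)) =
        Real.sqrt (PXY x y * QXY x y) * Real.sqrt (PYZ y z * QYZ y z) := by
    intro x y z
    have hPY0 : 0 ≤ PY y := Finset.sum_nonneg fun _ _ => Finset.sum_nonneg fun _ _ => hP0 _
    have hPXY0 : 0 ≤ PXY x y := Finset.sum_nonneg fun _ _ => hP0 _
    have hQXY0 : 0 ≤ QXY x y := Finset.sum_nonneg fun _ _ => hQ0 _
    rw [← Real.sqrt_mul (mul_nonneg hPY0 (Finset.sum_nonneg fun _ _ =>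
      Finset.sum_nonneg fun _ _ => hQ0 _)),
      ← Real.sqrt_mul (mul_nonneg hPXY0 hQXY0)]
    congr 1
    have h1 := hPmarkov x y z
    have h2 := hQmarkov x y z
    simp only [hPXY, hQXY, hPYZ, hQYZ, hPY, hQY]
    linear_combination (Q (x, y, z) * ∑ x', ∑ z', Q (x', y, z')) * h1 +
      ((∑ z', P (x, y, z')) * ∑ x', P (x', y, z)) * h2
  -- per-y key inequality
  have hkey : ∀ y : Y,
      (∑ x, Real.sqrt (PXY x y * QXY x y)) + (∑ z, Real.sqrt (PYZ y z * QYZ y z)) ≤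
        Real.sqrt (PY y * QY y) + ∑ x, ∑ z, Real.sqrt (P (x, y, z) * Q (x, y, z)) := by
    intro y
    apply aux_key
    · exact Finset.sum_nonneg fun _ _ => Real.sqrt_nonneg _
    · exact Finset.sum_nonneg fun _ _ => Real.sqrt_nonneg _
    · exact Finset.sum_nonneg fun _ _ => Finset.sum_nonneg fun _ _ => Real.sqrt_nonneg _
    · -- a ≤ r
      have := aux_cs (fun x => PXY x y) (fun x => QXY x y)
        (fun x => Finset.sum_nonneg fun _ _ => hP0 _)
        (fun x => Finset.sum_nonneg fun _ _ => hQ0 _)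
      simpa [hPXY, hQXY, hPY, hQY] using this
    · -- b ≤ r
      have := aux_cs (fun z => PYZ y z) (fun z => QYZ y z)
        (fun z => Finset.sum_nonneg fun _ _ => hP0 _)
        (fun z => Finset.sum_nonneg fun _ _ => hQ0 _)
      have hc : (∑ z, PYZ y z) = PY y := by
        simp only [hPYZ, hPY]; rw [Finset.sum_comm]
      have hc' : (∑ z, QYZ y z) = QY y := by
        simp only [hQYZ, hQY]; rw [Finset.sum_comm]
      rwa [hc, hc'] at this
    · -- r * s = a * b
      calc Real.sqrt (PY y * QY y) * ∑ x, ∑ z, Real.sqrt (P (x, y, z) * Q (x, y, z))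
          = ∑ x, ∑ z, Real.sqrt (PY y * QY y) * Real.sqrt (P (x, y, z) * Q (x, y, z)) := by
            rw [Finset.mul_sum]
            exact Finset.sum_congr rfl fun x _ => Finset.mul_sum _ _ _
        _ = ∑ x, ∑ z, Real.sqrt (PXY x y * QXY x y) * Real.sqrt (PYZ y z * QYZ y z) := by
            exact Finset.sum_congr rfl fun x _ => Finset.sum_congr rfl fun z _ => hsqrt x y z
        _ = (∑ x, Real.sqrt (PXY x y * QXY x y)) * ∑ z, Real.sqrt (PYZ y z * QYZ y z) :=
            (Finset.sum_mul_sum _ _ _ _).symm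
  -- sum of square roots of the Y-marginal is at most 1
  have hr1 : (∑ y, Real.sqrt (PY y * QY y)) ≤ 1 := by
    have := aux_cs PY QY
      (fun y => Finset.sum_nonneg fun _ _ => Finset.sum_nonneg fun _ _ => hP0 _)
      (fun y => Finset.sum_nonneg fun _ _ => Finset.sum_nonneg fun _ _ => hQ0 _)
    have hP1' : (∑ y, PY y) = 1 := by
      rw [Fintype.sum_prod_type] at hP1
      simp_rw [Fintype.sum_prod_type] at hP1
      rw [hPY, Finset.sum_comm]
      exact hP1
    have hQ1' : (∑ y, QY y) = 1 := by
      rw [Fintype.sum_prod_type] at hQ1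
      simp_rw [Fintype.sum_prod_type] at hQ1
      rw [hQY, Finset.sum_comm]
      exact hQ1
    calc (∑ y, Real.sqrt (PY y * QY y)) ≤ Real.sqrt ((∑ y, PY y) * (∑ y, QY y)) := this
      _ = 1 := by rw [hP1', hQ1']; simp
  -- assemble
  have hsum : (∑ y, ((∑ x, Real.sqrt (PXY x y * QXY x y)) +
        (∑ z, Real.sqrt (PYZ y z * QYZ y z)))) ≤
      1 + ∑ y, ∑ x, ∑ z, Real.sqrt (P (x, y, z) * Q (x, y, z)) := by
    calc (∑ y, ((∑ x, Real.sqrt (PXY x y * QXY x y)) +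
          (∑ z, Real.sqrt (PYZ y z * QYZ y z))))
        ≤ ∑ y, (Real.sqrt (PY y * QY y) +
            ∑ x, ∑ z, Real.sqrt (P (x, y, z) * Q (x, y, z))) :=
          Finset.sum_le_sum fun y _ => hkey y
      _ = (∑ y, Real.sqrt (PY y * QY y)) +
            ∑ y, ∑ x, ∑ z, Real.sqrt (P (x, y, z) * Q (x, y, z)) := by
          rw [Finset.sum_add_distrib]
      _ ≤ _ := by linarith
  -- rewrite the goal into this form
  unfold sqHellinger
  rw [Fintype.sum_prod_type]
  simp_rw [Fintype.sum_prod_type]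
  have e1 : (∑ x, ∑ y, ∑ z, Real.sqrt (P (x, y, z) * Q (x, y, z))) =
      ∑ y, ∑ x, ∑ z, Real.sqrt (P (x, y, z) * Q (x, y, z)) := by rw [Finset.sum_comm]
  have e2 : (∑ x, ∑ y, Real.sqrt (PXY x y * QXY x y)) =
      ∑ y, ∑ x, Real.sqrt (PXY x y * QXY x y) := by rw [Finset.sum_comm]
  rw [Finset.sum_add_distrib] at hsum
  simp only [hPXY, hQXY, hPYZ, hQYZ] at *
  linarith [hsum, e1, e2]
end

section
/- Let X = {X_1, …, X_n} be finitely-valued random variables partitioned into disjoint blocks S_1, …, S_L, and for each l ≥ 2 let Π_l ⊆ S_1 ∪ ⋯ ∪ S_{l−1}. Suppose P and Q are joint distributions on the n variables admitting the common factorization P(x) = P_{S_1}(x_{S_1})·∏_{l=2}^{L} P_{S_l | Π_l}(x_{S_l} | x_{Π_l}) and Q(x) = Q_{S_1}(x_{S_1})·∏_{l=2}^{L} Q_{S_l | Π_l}(x_{S_l} | x_{Π_l}); equivalently, for each l, under P (respectively Q) the block X_{S_l} is conditionally independent of X_{(S_1 ∪ ⋯ ∪ S_{l−1}) \ Π_l}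 given X_{Π_l}, i.e. the marginal on S_1 ∪ ⋯ ∪ S_l times the marginal on Π_l equals the marginal on S_1 ∪ ⋯ ∪ S_{l−1} times the marginal on S_l ∪ Π_l pointwise. Then H²(P, Q) ≤ H²(P_{S_1}, Q_{S_1}) + Σ_{l=2}^{L} H²(P_{S_l ∪ Π_l}, Q_{S_l ∪ Π_l}). -/
open scoped Classical in
/-- The marginal of a joint distribution `P` on coordinates in the finite set `T`. -/
noncomputable def marg {ι : Type*} [Fintype ι] {α : ι → Type*} [∀ i, Fintype (α i)]
    (P : (∀ i, α i) → ℝ) (T : Finset ι) : ((i : T) → α i) → ℝ :=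
  fun y => ∑ x : ∀ i, α i, if (∀ i : T, x i = y i) then P x else 0

open Finset

noncomputable def bhattacharyya {α : Type*} [Fintype α] (p q : α → ℝ) : ℝ :=
  ∑ k, √(p k * q k)

lemma sqHellinger_eq_one_sub_bhattacharyya {α : Type*} [Fintype α] (p q : α → ℝ) :
    sqHellinger p q = 1 - bhattacharyya p q := rfl

lemma sum_sqrt_mul_le_sqrt_mul_sum {ι : Type*} (s : Finset ι) {p q : ι → ℝ}
    (hp : 0 ≤ p) (hq : 0 ≤ q) :
    ∑ i ∈ s, √(p i * q i) ≤ √((∑ i ∈ s, p i) * ∑ i ∈ s, q i) := by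
  simp_rw [Real.sqrt_mul (hp _), Real.sqrt_mul (sum_nonneg fun i _ => hp i)]
  exact Real.sum_sqrt_mul_sqrt_le s hp hq

lemma bhattacharyya_le_one {α : Type*} [Fintype α] {p q : α → ℝ} (hp : 0 ≤ p) (hq : 0 ≤ q)
    (hp1 : ∑ k, p k = 1) (hq1 : ∑ k, q k = 1) : bhattacharyya p q ≤ 1 := by
  simpa [bhattacharyya, hp1, hq1] using sum_sqrt_mul_le_sqrt_mul_sum univ hp hq

section Pushforward

variable {Ω A B : Type*} [Fintype Ω]

open scoped Classical in
noncomputable def pushforward (f : Ω → A) (p : Ω → ℝ) (a : A) : ℝ :=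
  ∑ ω with f ω = a, p ω

lemma pushforward_apply [DecidableEq A] (f : Ω → A) (p : Ω → ℝ) (a : A) :
    pushforward f p a = ∑ ω with f ω = a, p ω := by
  rw [pushforward]
  congr!

lemma pushforward_nonneg (f : Ω → A) {p : Ω → ℝ} (hp : 0 ≤ p) : 0 ≤ pushforward f p :=
  fun _ => sum_nonneg fun ω _ => hp ω

lemma sum_pushforward [Fintype A] (f : Ω → A) (p : Ω → ℝ) :
    ∑ a, pushforward f p a = ∑ ω, p ω := by
  classical
  simp only [pushforward_apply]
  exact sum_fiberwise univ f p

lemma pushforward_comp [Fintype A] (g : A → B) (f : Ω → A) (p : Ω → ℝ) :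
    pushforward (g ∘ f) p = pushforward g (pushforward f p) := by
  classical
  funext b
  simp only [pushforward_apply]
  rw [← sum_fiberwise_of_maps_to (g := f) (t := univ.filter (g · = b))
    (by simp +contextual)]
  refine sum_congr rfl fun a ha => sum_congr ?_ fun _ _ => rfl
  ext ω
  simp only [mem_filter, mem_univ, true_and, Function.comp_apply] at ha ⊢
  constructor
  · exact And.right
  · rintro rfl; exact ⟨ha, rfl⟩

lemma pushforward_apply_of_injective {f : Ω → A} (hf : f.Injective) (p : Ω → ℝ) (ω : Ω) :
    pushforward f p (f ω) = p ω := by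
  classical
  rw [pushforward_apply, sum_eq_single_of_mem ω (by simp)
    fun ω' hω' hne => absurd (hf (mem_filter.1 hω').2) hne]

lemma bhattacharyya_pushforward_of_bijective [Fintype A] {f : Ω → A} (hf : f.Bijective)
    (p q : Ω → ℝ) : bhattacharyya (pushforward f p) (pushforward f q) = bhattacharyya p q := by
  refine (Fintype.sum_bijective f hf _ _ fun ω => ?_).symm
  rw [pushforward_apply_of_injective hf.1, pushforward_apply_of_injective hf.1]

lemma sum_fiber_sqrt_mul_le_sqrt_pushforward [DecidableEq A] (f : Ω → A) {p q : Ω → ℝ}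
    (hp : 0 ≤ p) (hq : 0 ≤ q) (a : A) :
    ∑ ω with f ω = a, √(p ω * q ω) ≤ √(pushforward f p a * pushforward f q a) := by
  simpa only [pushforward_apply] using sum_sqrt_mul_le_sqrt_mul_sum _ hp hq

end Pushforward

section PullbackSquare

variable {Ω A B C : Type*} [Fintype Ω] [Fintype A] [Fintype B]
  {φ : Ω → A} {ψ : Ω → B} {χA : A → C} {χB : B → C}

lemma sum_fiber_mul_eq_mul_sum_fiber [DecidableEq C] {R : Type*} [CommSemiring R]
    (hcomm : χA ∘ φ = χB ∘ ψ) (hglue : ∀ a b, χA a = χB b → ∃! ω, φ ω = a ∧ ψ ω = b)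
    (F : A → R) (G : B → R) (c : C) :
    ∑ ω with χA (φ ω) = c, F (φ ω) * G (ψ ω) =
      (∑ a with χA a = c, F a) * ∑ b with χB b = c, G b := by
  rw [sum_mul_sum, ← sum_product']
  refine sum_bij (fun ω _ => (φ ω, ψ ω)) (fun ω hω => ?_) (fun ω _ ω' _ h => ?_)
    (fun ab hab => ?_) fun _ _ => rfl
  · have hψ : χB (ψ ω) = c := (congrFun hcomm ω).symm.trans (mem_filter.1 hω).2
    simpa [hψ] using hω
  · obtain ⟨hφ, hψ⟩ := Prod.ext_iff.1 h
    exact (hglue _ _ (congrFun hcomm ω)).unique ⟨rfl, rfl⟩ ⟨hφ.symm, hψ.symm⟩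
  · simp only [mem_product, mem_filter, mem_univ, true_and] at hab
    obtain ⟨ω, ⟨hφ, hψ⟩, -⟩ := hglue ab.1 ab.2 (hab.1.trans hab.2.symm)
    exact ⟨ω, by simp [hφ, hab.1], Prod.ext hφ hψ⟩

lemma add_le_add_of_mul_eq_mul {u v w r : ℝ} (hu : 0 ≤ u) (hw : 0 ≤ w)
    (hur : u ≤ r) (hvr : v ≤ r) (h : w * r = u * v) : u + v ≤ w + r := by
  rcases (hu.trans hur).eq_or_lt with hr | hr
  · nlinarith
  · nlinarith [mul_nonneg (sub_nonneg.2 hur) (sub_nonneg.2 hvr)]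

theorem bhattacharyya_pushforward_add_le [Fintype C]
    (hcomm : χA ∘ φ = χB ∘ ψ) (hglue : ∀ a b, χA a = χB b → ∃! ω, φ ω = a ∧ ψ ω = b)
    {p q : Ω → ℝ} (hp : 0 ≤ p) (hq : 0 ≤ q)
    (hpfac : ∀ ω, p ω * pushforward (χA ∘ φ) p (χA (φ ω)) =
      pushforward φ p (φ ω) * pushforward ψ p (ψ ω))
    (hqfac : ∀ ω, q ω * pushforward (χA ∘ φ) q (χA (φ ω)) =
      pushforward φ q (φ ω) * pushforward ψ q (ψ ω)) :
    bhattacharyya (pushforward φ p) (pushforward φ q) +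
        bhattacharyya (pushforward ψ p) (pushforward ψ q) ≤
      bhattacharyya p q +
        bhattacharyya (pushforward (χA ∘ φ) p) (pushforward (χA ∘ φ) q) := by
  classical
  set r : C → ℝ := fun c => √(pushforward (χA ∘ φ) p c * pushforward (χA ∘ φ) q c)
  set u : C → ℝ := fun c => ∑ a with χA a = c, √(pushforward φ p a * pushforward φ q a)
  set v : C → ℝ := fun c => ∑ b with χB b = c, √(pushforward ψ p b * pushforward ψ q b)
  set w : C → ℝ := fun c => ∑ ω with χA (φ ω) = c, √(p ω * q ω)
  have hur : ∀ c, u c ≤ r c := fun c => by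
    simpa only [r, pushforward_comp] using sum_fiber_sqrt_mul_le_sqrt_pushforward χA
      (pushforward_nonneg φ hp) (pushforward_nonneg φ hq) c
  have hvr : ∀ c, v c ≤ r c := fun c => by
    simpa only [r, hcomm, pushforward_comp] using sum_fiber_sqrt_mul_le_sqrt_pushforward χB
      (pushforward_nonneg ψ hp) (pushforward_nonneg ψ hq) c
  have hwr : ∀ c, w c * r c = u c * v c := fun c => by
    rw [← sum_fiber_mul_eq_mul_sum_fiber hcomm hglue, sum_mul]
    refine sum_congr rfl fun ω hω => ?_
    rw [← (mem_filter.1 hω).2, ← Real.sqrt_mul (mul_nonneg (hp ω) (hq ω)),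
      ← Real.sqrt_mul (mul_nonneg (pushforward_nonneg φ hp _) (pushforward_nonneg φ hq _))]
    congr 1
    linear_combination (q ω * pushforward (χA ∘ φ) q (χA (φ ω))) * hpfac ω +
      (pushforward φ p (φ ω) * pushforward ψ p (ψ ω)) * hqfac ω
  calc _ = ∑ c, (u c + v c) := by
        rw [sum_add_distrib, sum_fiberwise univ χA, sum_fiberwise univ χB]; rfl
    _ ≤ ∑ c, (w c + r c) := sum_le_sum fun c _ =>
        add_le_add_of_mul_eq_mul (sum_nonneg fun _ _ => Real.sqrt_nonneg _)
          (sum_nonneg fun _ _ => Real.sqrt_nonneg _) (hur c) (hvr c) (hwr c)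
    _ = _ := by rw [sum_add_distrib, sum_fiberwise univ fun ω => χA (φ ω)]; rfl

end PullbackSquare

section Restrict

variable {ι : Type*} {α : ι → Type*}

lemma Finset.restrict_surjective [∀ i, Nonempty (α i)] (T : Finset ι) :
    (T.restrict (π := α)).Surjective := by
  classical
  exact fun y => ⟨fun i => if h : i ∈ T then y ⟨i, h⟩ else Classical.arbitrary _,
    funext fun i => dif_pos i.2⟩

lemma Finset.restrict_univ_bijective [Fintype ι] : (univ.restrict (π := α)).Bijective :=
  ⟨fun _ _ h => funext fun i => congrFun h ⟨i, mem_univ i⟩,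
    fun y => ⟨fun i => y ⟨i, mem_univ i⟩, rfl⟩⟩

lemma existsUnique_restrict₂_eq [DecidableEq ι] {U V W D : Finset ι}
    (hWU : W ⊆ U) (hWV : W ⊆ V) (hUD : U ⊆ D) (hVD : V ⊆ D) (hD : D ⊆ U ∪ V)
    (hUV : U ∩ V ⊆ W) (a : ∀ i : U, α i) (b : ∀ i : V, α i)
    (hab : restrict₂ hWU a = restrict₂ hWV b) :
    ∃! ω : ∀ i : D, α i, restrict₂ hUD ω = a ∧ restrict₂ hVD ω = b := by
  have hV : ∀ i : D, i.1 ∉ U → i.1 ∈ V := fun i h => (mem_union.1 (hD i.2)).resolve_left h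
  refine ⟨fun i => if h : i.1 ∈ U then a ⟨i, h⟩ else b ⟨i, hV i h⟩, ⟨?_, ?_⟩, ?_⟩
  · funext i
    exact dif_pos i.2
  · funext i
    by_cases h : i.1 ∈ U
    · simpa [h] using congrFun hab ⟨i, hUV (mem_inter.2 ⟨h, i.2⟩)⟩
    · simp [h]
  · rintro ω ⟨rfl, rfl⟩
    funext i
    by_cases h : i.1 ∈ U <;> simp [h]

end Restrict

section Marginal

variable {ι : Type*} [Fintype ι] [DecidableEq ι] {α : ι → Type*} [∀ i, Fintype (α i)]

lemma marg_eq_pushforward (P : (∀ i, α i) → ℝ) (T : Finset ι) :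
    marg P T = pushforward T.restrict P := by
  classical
  funext y
  rw [marg, pushforward_apply, sum_filter]
  congr! 2 with x
  exact ⟨fun h => funext h, fun h i => congrFun h i⟩

lemma pushforward_restrict₂_marg (P : (∀ i, α i) → ℝ) {T T' : Finset ι} (h : T ⊆ T') :
    pushforward (restrict₂ h) (marg P T') = marg P T := by
  rw [marg_eq_pushforward, marg_eq_pushforward, ← pushforward_comp, restrict₂_comp_restrict]

variable {P Q : (∀ i, α i) → ℝ}

lemma marg_nonneg (hP : 0 ≤ P) (T : Finset ι) : 0 ≤ marg P T := by
  rw [marg_eq_pushforward]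
  exact pushforward_nonneg _ hP

lemma bhattacharyya_marg_le_one (hP : 0 ≤ P) (hQ : 0 ≤ Q) (hP1 : ∑ x, P x = 1)
    (hQ1 : ∑ x, Q x = 1) (T : Finset ι) : bhattacharyya (marg P T) (marg Q T) ≤ 1 := by
  refine bhattacharyya_le_one (marg_nonneg hP T) (marg_nonneg hQ T) ?_ ?_ <;>
    rwa [marg_eq_pushforward, sum_pushforward]

lemma bhattacharyya_marg_empty (P Q : (∀ i, α i) → ℝ) :
    bhattacharyya (marg P ∅) (marg Q ∅) = √((∑ x, P x) * ∑ x, Q x) := by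
  have hmarg : ∀ (R : (∀ i, α i) → ℝ) y, marg R ∅ y = ∑ x, R x := fun R y => by
    rw [marg]
    congr!
  simp [bhattacharyya, hmarg]

lemma bhattacharyya_marg_univ (P Q : (∀ i, α i) → ℝ) :
    bhattacharyya (marg P univ) (marg Q univ) = bhattacharyya P Q := by
  rw [marg_eq_pushforward, marg_eq_pushforward,
    bhattacharyya_pushforward_of_bijective restrict_univ_bijective]

theorem bhattacharyya_marg_add_le [∀ i, Nonempty (α i)] {A B C : Finset ι} (hCA : C ⊆ A)
    (hAB : Disjoint A B) (hP : 0 ≤ P) (hQ : 0 ≤ Q)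
    (hPfac : ∀ x, marg P (A ∪ B) ((A ∪ B).restrict x) * marg P C (C.restrict x) =
      marg P A (A.restrict x) * marg P (B ∪ C) ((B ∪ C).restrict x))
    (hQfac : ∀ x, marg Q (A ∪ B) ((A ∪ B).restrict x) * marg Q C (C.restrict x) =
      marg Q A (A.restrict x) * marg Q (B ∪ C) ((B ∪ C).restrict x)) :
    bhattacharyya (marg P A) (marg Q A) + bhattacharyya (marg P (B ∪ C)) (marg Q (B ∪ C)) ≤
      bhattacharyya (marg P (A ∪ B)) (marg Q (A ∪ B)) +
        bhattacharyya (marg P C) (marg Q C) := by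
  have hA : A ⊆ A ∪ B := subset_union_left
  have hBC : B ∪ C ⊆ A ∪ B := union_subset subset_union_right (hCA.trans hA)
  have hinter : A ∩ (B ∪ C) ⊆ C := by
    rw [inter_union_distrib_left, disjoint_iff_inter_eq_empty.1 hAB, empty_union]
    exact inter_subset_right
  have hfac : ∀ R : (∀ i, α i) → ℝ, (∀ x, marg R (A ∪ B) ((A ∪ B).restrict x) *
        marg R C (C.restrict x) = marg R A (A.restrict x) * marg R (B ∪ C) ((B ∪ C).restrict x)) →
      ∀ ω, marg R (A ∪ B) ω * marg R C (restrict₂ hCA (restrict₂ hA ω)) =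
        marg R A (restrict₂ hA ω) * marg R (B ∪ C) (restrict₂ hBC ω) := by
    intro R hR ω
    obtain ⟨x, rfl⟩ := (A ∪ B).restrict_surjective ω
    exact hR x
  have key := bhattacharyya_pushforward_add_le (φ := restrict₂ hA) (ψ := restrict₂ hBC)
    (χA := restrict₂ hCA) (χB := restrict₂ subset_union_right) rfl
    (existsUnique_restrict₂_eq hCA subset_union_right hA hBC
      (union_subset_union subset_rfl subset_union_left) hinter)
    (marg_nonneg hP _) (marg_nonneg hQ _)
    (by simpa only [restrict₂_comp_restrict₂, pushforward_restrict₂_marg] using hfac P hPfac)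
    (by simpa only [restrict₂_comp_restrict₂, pushforward_restrict₂_marg] using hfac Q hQfac)
  simpa only [restrict₂_comp_restrict₂, pushforward_restrict₂_marg] using key

end Marginal

section PrefixUnion

variable {ι : Type*} [DecidableEq ι] {L : ℕ}

def prefixUnion (S : Fin L → Finset ι) (m : ℕ) : Finset ι :=
  (univ.filter fun j : Fin L => (j : ℕ) < m).biUnion S

variable (S : Fin L → Finset ι)

lemma prefixUnion_zero : prefixUnion S 0 = ∅ := by
  simp [prefixUnion]

lemma prefixUnion_length : prefixUnion S L = univ.biUnion S := by
  simp [prefixUnion]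

lemma prefixUnion_val (l : Fin L) : prefixUnion S l = (univ.filter (· < l)).biUnion S := rfl

lemma prefixUnion_val_succ (l : Fin L) : prefixUnion S (l + 1) = prefixUnion S l ∪ S l := by
  have : (univ.filter fun j : Fin L => (j : ℕ) < l + 1) = insert l (univ.filter (· < l)) := by
    ext j
    simp [le_iff_eq_or_lt, Fin.val_inj]
  rw [prefixUnion, this, biUnion_insert, union_comm, prefixUnion_val]

lemma filter_le_biUnion_eq_prefixUnion (l : Fin L) :
    (univ.filter (· ≤ l)).biUnion S = prefixUnion S (l + 1) := by
  simp only [prefixUnion, Fin.le_def, Nat.lt_succ_iff]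

lemma disjoint_prefixUnion {S : Fin L → Finset ι}
    (hdisj : ∀ l l' : Fin L, l ≠ l' → Disjoint (S l) (S l')) (l : Fin L) :
    Disjoint (prefixUnion S l) (S l) := by
  simp only [prefixUnion, disjoint_biUnion_left, mem_filter, mem_univ, true_and]
  exact fun j hj => hdisj j l (Fin.ne_of_lt hj)

lemma marg_prefixUnion_factorization [Fintype ι] {α : ι → Type*} [∀ i, Fintype (α i)]
    {S Par : Fin L → Finset ι} (hPar : ∀ l : Fin L, Par l ⊆ (univ.filter (· < l)).biUnion S)
    {R : (∀ i, α i) → ℝ}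
    (hR : ∀ l : Fin L, 0 < l.val → ∀ x : ∀ i, α i,
      marg R ((univ.filter (· ≤ l)).biUnion S) (fun i => x i.1) *
          marg R (Par l) (fun i => x i.1) =
        marg R ((univ.filter (· < l)).biUnion S) (fun i => x i.1) *
          marg R (S l ∪ Par l) (fun i => x i.1))
    (l : Fin L) (x : ∀ i, α i) :
    marg R (prefixUnion S l ∪ S l) ((prefixUnion S l ∪ S l).restrict x) *
        marg R (Par l) ((Par l).restrict x) =
      marg R (prefixUnion S l) ((prefixUnion S l).restrict x) *
        marg R (S l ∪ Par l) ((S l ∪ Par l).restrict x) := by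
  rcases Nat.eq_zero_or_pos l with hl | hl
  · have hS : prefixUnion S l = ∅ := by rw [hl, prefixUnion_zero]
    have hPar0 : Par l = ∅ := subset_empty.1 (hS ▸ hPar l)
    rw [hS, hPar0, empty_union, union_empty, mul_comm]
  · have h := hR l hl x
    rwa [filter_le_biUnion_eq_prefixUnion, prefixUnion_val_succ, ← prefixUnion_val] at h

end PrefixUnion

/-- **Squared Hellinger subadditivity.**
Variables `X_1, …, X_n` (with finite value types `α i`) are partitioned into disjoint
blocks `S 0, …, S (L-1)`, and for each `l` the conditioning set `Par l` is contained in
`S 0 ∪ ⋯ ∪ S (l-1)`.  If `P` and `Q` are joint distributions admitting the common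
factorization — expressed equivalently by the pointwise conditional-independence
identity: for each `l ≥ 2` (i.e. `0 < l.val`), the marginal on `S 0 ∪ ⋯ ∪ S l` times
the marginal on `Par l` equals the marginal on `S 0 ∪ ⋯ ∪ S (l-1)` times the marginal
on `S l ∪ Par l` — then
`H²(P,Q) ≤ ∑ l, H²(P_{S l ∪ Par l}, Q_{S l ∪ Par l})`
(where `Par 0 = ∅` is forced, so the `l = 0` term is `H²(P_{S 0}, Q_{S 0})`). -/
theorem sqHellinger_subadditive
    {n L : ℕ} (α : Fin n → Type*) [∀ i, Fintype (α i)]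
    (S : Fin L → Finset (Fin n))
    (hdisj : ∀ l l' : Fin L, l ≠ l' → Disjoint (S l) (S l'))
    (hcover : Finset.univ.biUnion S = (Finset.univ : Finset (Fin n)))
    (Par : Fin L → Finset (Fin n))
    (hPar : ∀ l : Fin L, Par l ⊆ (Finset.univ.filter (fun j => j < l)).biUnion S)
    (P Q : (∀ i, α i) → ℝ)
    (hP0 : ∀ x, 0 ≤ P x) (hP1 : ∑ x, P x = 1)
    (hQ0 : ∀ x, 0 ≤ Q x) (hQ1 : ∑ x, Q x = 1)
    (hPfac : ∀ l : Fin L, 0 < l.val → ∀ x : ∀ i, α i,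
      marg P ((Finset.univ.filter (fun j => j ≤ l)).biUnion S) (fun i => x i.1) *
          marg P (Par l) (fun i => x i.1) =
        marg P ((Finset.univ.filter (fun j => j < l)).biUnion S) (fun i => x i.1) *
          marg P (S l ∪ Par l) (fun i => x i.1))
    (hQfac : ∀ l : Fin L, 0 < l.val → ∀ x : ∀ i, α i,
      marg Q ((Finset.univ.filter (fun j => j ≤ l)).biUnion S) (fun i => x i.1) *
          marg Q (Par l) (fun i => x i.1) =
        marg Q ((Finset.univ.filter (fun j => j < l)).biUnion S) (fun i => x i.1) *
          marg Q (S l ∪ Par l) (fun i => x i.1)) :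
    sqHellinger P Q ≤
      ∑ l : Fin L, sqHellinger (marg P (S l ∪ Par l)) (marg Q (S l ∪ Par l)) := by
  have hne : ∀ i, Nonempty (α i) := fun i => by
    by_contra h
    have : IsEmpty (∀ i, α i) := isEmpty_pi.2 ⟨i, not_nonempty_iff.1 h⟩
    simp at hP1
  set b : ℕ → ℝ := fun m => bhattacharyya (marg P (prefixUnion S m)) (marg Q (prefixUnion S m))
  have hb0 : b 0 = 1 := by
    simp only [b]
    rw [prefixUnion_zero, bhattacharyya_marg_empty, hP1, hQ1, mul_one, Real.sqrt_one]
  have hbL : b L = bhattacharyya P Q := by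
    simp only [b]
    rw [prefixUnion_length, hcover, bhattacharyya_marg_univ]
  have hstep : ∀ l : Fin L, b l - b (l.val + 1) ≤
      sqHellinger (marg P (S l ∪ Par l)) (marg Q (S l ∪ Par l)) := fun l => by
    have key := bhattacharyya_marg_add_le (A := prefixUnion S l) (hPar l)
      (disjoint_prefixUnion hdisj l) hP0 hQ0
      (marg_prefixUnion_factorization hPar hPfac l) (marg_prefixUnion_factorization hPar hQfac l)
    have hone := bhattacharyya_marg_le_one hP0 hQ0 hP1 hQ1 (Par l)
    simp only [b, sqHellinger_eq_one_sub_bhattacharyya]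
    rw [prefixUnion_val_succ]
    linarith
  calc sqHellinger P Q = b 0 - b L := by rw [hb0, hbL]; rfl
    _ = ∑ l : Fin L, (b l - b (l.val + 1)) := by
      rw [Fin.sum_univ_eq_sum_range (fun m => b m - b (m + 1)), sum_range_sub']
    _ ≤ _ := sum_le_sum fun l _ => hstep l
end

section
/- Suppose P and Q are joint distributions on finitely-valued variables X_1, …, X_n with a common tree graphical-model structure: the tree is rooted at X_1, the nodes are ordered so that each node comes after its parent (breadth-first order), X_{π_i} denotes the parent of X_i, and P(x) = P_{X_1}(x_1)·∏_{i=2}^{n} P_{X_i | X_{π_i}}(x_i | x_{π_i}), Q(x) = Q_{X_1}(x_1)·∏_{i=2}^{n} Q_{X_i | X_{π_i}}(x_i | x_{π_i}). Then H²(P, Q) ≤ H²(P_{X_1}, Q_{X_1}) + Σ_{i=2}^{n} H²(P_{X_i,X_{π_i}}, Q_{X_i,X_{π_i}}); in particular, if H²(P, Q) ≥ ε then there exists i with H²(P_{X_i,X_{π_i}}, Q_{X_i,X_{π_i}}) ≥ ε/n. -/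
open Finset

section Helpers

open scoped Classical

variable {ι : Type*} [Fintype ι] [DecidableEq ι] {α : ι → Type*} [∀ i, Fintype (α i)]

lemma marg_nonneg_s5 {P : (∀ i, α i) → ℝ} (hP0 : ∀ x, 0 ≤ P x) (S : Finset ι)
    (y : (i : S) → α i) : 0 ≤ marg P S y := by
  classical
  unfold marg
  refine Finset.sum_nonneg fun x _ => ?_
  split
  · exact hP0 x
  · exact le_rfl

/-- generic marginal-consistency: the marginal on `S ⊆ T` as a sum of the marginal on `T`
over the fiber of the restriction map. -/
lemma marg_fiber_sum {P : (∀ i, α i) → ℝ} {S T : Finset ι} (hST : S ⊆ T)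
    (z : (j : S) → α j) :
    ∑ y ∈ Finset.univ.filter
        (fun y : (j : T) → α j => (fun j : S => y ⟨j.1, hST j.2⟩) = z),
      marg P T y = marg P S z := by
  rw [Finset.sum_filter]
  unfold marg
  have step1 : ∀ (c : Prop) [Decidable c] (s : Finset (∀ i, α i)) (F : (∀ i, α i) → ℝ),
      (if c then ∑ x ∈ s, F x else 0) = ∑ x ∈ s, if c then F x else 0 := by
    intro c _ s F
    split
    · rfl
    · exact Finset.sum_const_zero.symm
  simp_rw [step1]
  rw [Finset.sum_comm]
  have step2 : ∀ x : ∀ i, α i,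
      (∑ y : (j : T) → α j, if (fun j : S => y ⟨j.1, hST j.2⟩) = z then
          (if (∀ i : T, x i = y i) then P x else 0) else 0)
      = if (∀ i : S, x i = z i) then P x else 0 := by
    intro x
    rw [Finset.sum_eq_single (fun j : T => x j.1)]
    · by_cases h : (∀ i : S, x i = z i)
      · rw [if_pos, if_pos h, if_pos (fun i => rfl)]
        funext j
        exact h j
      · rw [if_neg, if_neg h]
        intro hc
        exact h fun i => by
          have := congrFun hc i
          simpa using this
    · intro y _ hy
      by_cases h2 : (∀ i : T, x i = y i)
      · exact absurd (funext fun j => (h2 j).symm) hy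
      · rw [if_neg h2, ite_self]
    · intro h
      exact absurd (Finset.mem_univ _) h
  simp_rw [step2]

end Helpers

section Helpers2

open scoped Classical

variable {ι : Type*} [Fintype ι] [DecidableEq ι] {α : ι → Type*} [∀ i, Fintype (α i)]

/-- Bhattacharyya coefficient of two marginals. -/
noncomputable def BC (P Q : (∀ i, α i) → ℝ) (S : Finset ι) : ℝ :=
  ∑ y : (j : S) → α j, Real.sqrt (marg P S y * marg Q S y)

lemma sqHellinger_marg (P Q : (∀ i, α i) → ℝ) (S : Finset ι) :
    sqHellinger (marg P S) (marg Q S) = 1 - BC P Q S := rfl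

/-- Cauchy-Schwarz for square roots of products. -/
lemma sum_sqrt_mul_le {β : Type*} (s : Finset β) (p q : β → ℝ)
    (hp : ∀ b ∈ s, 0 ≤ p b) (hq : ∀ b ∈ s, 0 ≤ q b) :
    ∑ b ∈ s, Real.sqrt (p b * q b) ≤ Real.sqrt ((∑ b ∈ s, p b) * (∑ b ∈ s, q b)) := by
  refine (Real.le_sqrt (Finset.sum_nonneg fun b _ => Real.sqrt_nonneg _)
    (mul_nonneg (Finset.sum_nonneg hp) (Finset.sum_nonneg hq))).mpr ?_
  exact Finset.sum_sq_le_sum_mul_sum_of_sq_eq_mul s hp hq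
    (fun b hb => Real.sq_sqrt (mul_nonneg (hp b hb) (hq b hb)))

lemma fiber_CS {P Q : (∀ i, α i) → ℝ} (hP0 : ∀ x, 0 ≤ P x) (hQ0 : ∀ x, 0 ≤ Q x)
    {S T : Finset ι} (hST : S ⊆ T) (z : (j : S) → α j) :
    ∑ y ∈ Finset.univ.filter
        (fun y : (j : T) → α j => (fun j : S => y ⟨j.1, hST j.2⟩) = z),
      Real.sqrt (marg P T y * marg Q T y) ≤ Real.sqrt (marg P S z * marg Q S z) := by
  calc ∑ y ∈ Finset.univ.filter
        (fun y : (j : T) → α j => (fun j : S => y ⟨j.1, hST j.2⟩) = z),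
      Real.sqrt (marg P T y * marg Q T y)
      ≤ Real.sqrt ((∑ y ∈ Finset.univ.filter
          (fun y : (j : T) → α j => (fun j : S => y ⟨j.1, hST j.2⟩) = z), marg P T y) *
          (∑ y ∈ Finset.univ.filter
          (fun y : (j : T) → α j => (fun j : S => y ⟨j.1, hST j.2⟩) = z), marg Q T y)) :=
        sum_sqrt_mul_le _ _ _ (fun y _ => marg_nonneg_s5 hP0 _ y) (fun y _ => marg_nonneg_s5 hQ0 _ y)
    _ = Real.sqrt (marg P S z * marg Q S z) := by
        rw [marg_fiber_sum hST z, marg_fiber_sum hST z]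

lemma BC_mono {P Q : (∀ i, α i) → ℝ} (hP0 : ∀ x, 0 ≤ P x) (hQ0 : ∀ x, 0 ≤ Q x)
    {S T : Finset ι} (hST : S ⊆ T) : BC P Q T ≤ BC P Q S := by
  unfold BC
  rw [← Finset.sum_fiberwise_of_maps_to
    (g := fun y : (j : T) → α j => (fun j : S => y ⟨j.1, hST j.2⟩))
    (fun y _ => Finset.mem_univ _)
    (fun y => Real.sqrt (marg P T y * marg Q T y))]
  exact Finset.sum_le_sum fun z _ => fiber_CS hP0 hQ0 hST z

lemma marg_empty {P : (∀ i, α i) → ℝ} (y : (j : (∅ : Finset ι)) → α j) :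
    marg P ∅ y = ∑ x, P x := by
  unfold marg
  have huniv : ∀ (s : Finset (∀ i, α i)),
      ∑ x ∈ s, (if (∀ i : (∅ : Finset ι), x i = y i) then P x else 0) = ∑ x ∈ s, P x :=
    fun s => Finset.sum_congr rfl fun x _ => by
      rw [if_pos]
      intro j
      exact absurd j.2 (Finset.notMem_empty _)
  rw [huniv]
  refine Finset.sum_congr ?_ fun x _ => rfl
  congr 1
  exact Subsingleton.elim _ _

lemma BC_nonneg (P Q : (∀ i, α i) → ℝ) (S : Finset ι) : 0 ≤ BC P Q S :=
  Finset.sum_nonneg fun y _ => Real.sqrt_nonneg _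

lemma BC_le_one {P Q : (∀ i, α i) → ℝ} (hP0 : ∀ x, 0 ≤ P x) (hP1 : ∑ x, P x = 1)
    (hQ0 : ∀ x, 0 ≤ Q x) (hQ1 : ∑ x, Q x = 1) (S : Finset ι) : BC P Q S ≤ 1 := by
  refine (BC_mono hP0 hQ0 (Finset.empty_subset S)).trans ?_
  unfold BC
  haveI : Unique ((j : (∅ : Finset ι)) → α j) :=
    ⟨⟨fun j => absurd j.2 (Finset.notMem_empty _)⟩, fun y => funext fun j => absurd j.2 (Finset.notMem_empty _)⟩
  rw [Fintype.sum_unique]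
  rw [marg_empty, marg_empty, hP1, hQ1]
  simp

end Helpers2

section Helpers3

open scoped Classical

variable {ι : Type*} [Fintype ι] [DecidableEq ι] {α : ι → Type*} [∀ i, Fintype (α i)]

/-- Extend a tuple on `S` by a value at a fresh coordinate `i`. -/
noncomputable def insFun {S : Finset ι} {i : ι} (b : (j : S) → α j) (s : α i) :
    (j : (insert i S : Finset ι)) → α j :=
  fun j => if h : j.1 = i then cast (congrArg α h.symm) s
    else b ⟨j.1, (Finset.mem_insert.mp j.2).resolve_left h⟩

lemma insFun_restrict {S : Finset ι} {i : ι} (hi : i ∉ S) (b : (j : S) → α j) (s : α i) :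
    (fun j : S => insFun b s ⟨j.1, Finset.mem_insert_of_mem j.2⟩) = b := by
  funext j
  unfold insFun
  rw [dif_neg (fun h : j.1 = i => hi (h ▸ j.2))]

lemma insFun_self {S : Finset ι} {i : ι} (b : (j : S) → α j) (s : α i) :
    insFun b s ⟨i, Finset.mem_insert_self i S⟩ = s := by
  unfold insFun
  rw [dif_pos rfl]
  rfl

/-- Fibers of the restriction map from `insert i S` to `S` are enumerated by `α i`. -/
lemma sum_fiber_insert {S : Finset ι} {i : ι} (hi : i ∉ S) (b : (j : S) → α j)
    (G : ((j : (insert i S : Finset ι)) → α j) → ℝ) :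
    ∑ y ∈ Finset.univ.filter (fun y : (j : (insert i S : Finset ι)) → α j =>
        (fun j : S => y ⟨j.1, Finset.mem_insert_of_mem j.2⟩) = b), G y
      = ∑ s : α i, G (insFun b s) := by
  have key : ∀ y ∈ Finset.univ.filter (fun y : (j : (insert i S : Finset ι)) → α j =>
      (fun j : S => y ⟨j.1, Finset.mem_insert_of_mem j.2⟩) = b),
      insFun b (y ⟨i, Finset.mem_insert_self i S⟩) = y := by
    intro y hy
    rw [Finset.mem_filter] at hy
    funext j
    show (if h : j.1 = i then cast (congrArg α h.symm) (y ⟨i, Finset.mem_insert_self i S⟩)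
      else b ⟨j.1, (Finset.mem_insert.mp j.2).resolve_left h⟩) = y j
    by_cases h : j.1 = i
    · rcases j with ⟨j1, hj⟩
      dsimp only at h
      subst h
      rw [dif_pos rfl]
      rfl
    · rw [dif_neg h]
      exact (congrFun hy.2 ⟨j.1, (Finset.mem_insert.mp j.2).resolve_left h⟩).symm
  refine Finset.sum_bij' (fun y _ => y ⟨i, Finset.mem_insert_self i S⟩)
    (fun s _ => insFun b s) ?_ ?_ ?_ ?_ ?_
  · intro y _; exact Finset.mem_univ _
  · intro s _
    rw [Finset.mem_filter]
    exact ⟨Finset.mem_univ _, insFun_restrict hi b s⟩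
  · intro y hy
    exact key y hy
  · intro s _
    exact insFun_self b s
  · intro y hy
    rw [key y hy]

end Helpers3


section BCt

open scoped Classical

variable {ι : Type*} [Fintype ι] [DecidableEq ι] {α : ι → Type*} [∀ i, Fintype (α i)]

noncomputable def BCt (P Q : (∀ i, α i) → ℝ) (S : Finset ι) (y : (j : S) → α j) : ℝ :=
  Real.sqrt (marg P S y * marg Q S y)

lemma BCt_nonneg (P Q : (∀ i, α i) → ℝ) (S : Finset ι) (y : (j : S) → α j) :
    0 ≤ BCt P Q S y := Real.sqrt_nonneg _

lemma sqrt_cross {a a' c c' d d' e e' : ℝ} (ha : 0 ≤ a) (ha' : 0 ≤ a')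
    (hd : 0 ≤ d) (hd' : 0 ≤ d')
    (h1 : a * c = d * e) (h2 : a' * c' = d' * e') :
    Real.sqrt (a * a') * Real.sqrt (c * c') = Real.sqrt (d * d') * Real.sqrt (e * e') := by
  rw [← Real.sqrt_mul (mul_nonneg ha ha'), ← Real.sqrt_mul (mul_nonneg hd hd')]
  congr 1
  linear_combination (a' * c') * h1 + (d * e) * h2

end BCt

section AbstractStep

/-- Abstract core of the Hellinger step inequality. -/
lemma abstract_step {β γ δ : Type*} [Fintype β] [Fintype γ] [Fintype δ] [DecidableEq γ]
    (u : β → ℝ) (w V : γ → ℝ) (G : β → δ → ℝ) (vv : γ → δ → ℝ) (r : β → γ)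
    (hu0 : ∀ b, 0 ≤ u b) (hw0 : ∀ z, 0 ≤ w z) (hV0 : ∀ z, 0 ≤ V z)
    (hG0 : ∀ b s, 0 ≤ G b s)
    (hkey : ∀ b s, G b s * w (r b) = u b * vv (r b) s)
    (hfw : ∀ z, ∑ b ∈ Finset.univ.filter (fun b => r b = z), u b ≤ w z)
    (hVw : ∀ z, V z ≤ w z)
    (hVv : ∀ z, V z = ∑ s, vv z s)
    (hw1 : ∑ z, w z ≤ 1) :
    ∑ b, u b + ∑ z, V z ≤ 1 + ∑ b, ∑ s, G b s := by
  classical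
  have hf0 : ∀ z, 0 ≤ ∑ b ∈ Finset.univ.filter (fun b => r b = z), u b :=
    fun z => Finset.sum_nonneg fun b _ => hu0 b
  have hsumu : ∑ b, u b = ∑ z, ∑ b ∈ Finset.univ.filter (fun b => r b = z), u b :=
    (Finset.sum_fiberwise_of_maps_to (fun b _ => Finset.mem_univ (r b)) u).symm
  have hsumG : ∑ b, (∑ s, G b s) =
      ∑ z, ∑ b ∈ Finset.univ.filter (fun b => r b = z), ∑ s, G b s :=
    (Finset.sum_fiberwise_of_maps_to (fun b _ => Finset.mem_univ (r b)) _).symm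
  have hlow : ∀ z, (∑ b ∈ Finset.univ.filter (fun b => r b = z), u b) * V z / w z ≤
      ∑ b ∈ Finset.univ.filter (fun b => r b = z), ∑ s, G b s := by
    intro z
    by_cases hwz : w z = 0
    · have hfz : ∑ b ∈ Finset.univ.filter (fun b => r b = z), u b = 0 :=
        le_antisymm (hwz ▸ hfw z) (hf0 z)
      rw [hfz, zero_mul, zero_div]
      exact Finset.sum_nonneg fun b _ => Finset.sum_nonneg fun s _ => hG0 b s
    · have hGs : ∀ b ∈ Finset.univ.filter (fun b => r b = z),
          ∑ s, G b s = u b * V z / w z := by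
        intro b hb
        have hbz : r b = z := (Finset.mem_filter.mp hb).2
        have hG : ∀ s, G b s = u b * vv z s / w z := by
          intro s
          refine (eq_div_iff hwz).mpr ?_
          rw [← hbz]
          exact hkey b s
        rw [Finset.sum_congr rfl fun s _ => hG s, ← Finset.sum_div, ← Finset.mul_sum,
          ← hVv z]
      rw [Finset.sum_congr rfl hGs, ← Finset.sum_div, ← Finset.sum_mul]
  have per_z : ∀ z, (∑ b ∈ Finset.univ.filter (fun b => r b = z), u b) + V z ≤
      w z + (∑ b ∈ Finset.univ.filter (fun b => r b = z), u b) * V z / w z := by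
    intro z
    by_cases hwz : w z = 0
    · have hfz : ∑ b ∈ Finset.univ.filter (fun b => r b = z), u b = 0 :=
        le_antisymm (hwz ▸ hfw z) (hf0 z)
      have hVz : V z = 0 := le_antisymm (hwz ▸ hVw z) (hV0 z)
      rw [hfz, hVz, hwz]
      norm_num
    · have hwpos : 0 < w z := lt_of_le_of_ne (hw0 z) (Ne.symm hwz)
      rw [← sub_le_iff_le_add', le_div_iff₀ hwpos]
      nlinarith [mul_nonneg (sub_nonneg.mpr (hfw z)) (sub_nonneg.mpr (hVw z))]
  calc ∑ b, u b + ∑ z, V z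
      = ∑ z, ((∑ b ∈ Finset.univ.filter (fun b => r b = z), u b) + V z) := by
        rw [Finset.sum_add_distrib, hsumu]
    _ ≤ ∑ z, (w z + (∑ b ∈ Finset.univ.filter (fun b => r b = z), u b) * V z / w z) :=
        Finset.sum_le_sum fun z _ => per_z z
    _ = ∑ z, w z + ∑ z, (∑ b ∈ Finset.univ.filter (fun b => r b = z), u b) * V z / w z :=
        Finset.sum_add_distrib
    _ ≤ 1 + ∑ b, ∑ s, G b s := by
        rw [hsumG]
        exact add_le_add hw1 (Finset.sum_le_sum fun z _ => hlow z)

end AbstractStep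

section StepLemma

open scoped Classical

variable {ι : Type*} [Fintype ι] [DecidableEq ι] {α : ι → Type*} [∀ i, Fintype (α i)]

set_option maxHeartbeats 1000000 in
lemma step_ineq [LinearOrder ι] [LocallyFiniteOrder ι] [LocallyFiniteOrderBot ι]
    (P Q : (∀ i, α i) → ℝ)
    (hP0 : ∀ x, 0 ≤ P x) (hP1 : ∑ x, P x = 1)
    (hQ0 : ∀ x, 0 ≤ Q x) (hQ1 : ∑ x, Q x = 1)
    (hne : ∀ j, Nonempty (α j)) {c₀ i : ι} (hci : c₀ < i)
    (hPf : ∀ x : ∀ j, α j,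
      marg P (Finset.Iic i) (fun j => x j.1) * marg P {c₀} (fun j => x j.1) =
        marg P (Finset.Iio i) (fun j => x j.1) * marg P {c₀, i} (fun j => x j.1))
    (hQf : ∀ x : ∀ j, α j,
      marg Q (Finset.Iic i) (fun j => x j.1) * marg Q {c₀} (fun j => x j.1) =
        marg Q (Finset.Iio i) (fun j => x j.1) * marg Q {c₀, i} (fun j => x j.1)) :
    BC P Q (Finset.Iio i) + BC P Q {c₀, i} ≤ 1 + BC P Q (Finset.Iic i) := by
  have hIic : Finset.Iic i = insert i (Finset.Iio i) := (Finset.Iio_insert i).symm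
  have hpair : ({c₀, i} : Finset ι) = insert i {c₀} := Finset.pair_comm c₀ i
  rw [hIic, hpair] at hPf hQf ⊢
  have hc0i : c₀ ≠ i := ne_of_lt hci
  have hiIo : i ∉ Finset.Iio i := by simp
  have hiSp : i ∉ ({c₀} : Finset ι) := by simp [Ne.symm hc0i]
  have hc₀Io : c₀ ∈ Finset.Iio i := Finset.mem_Iio.mpr hci
  have hSpIo : ({c₀} : Finset ι) ⊆ Finset.Iio i := Finset.singleton_subset_iff.mpr hc₀Io
  have hSpT₂ : ({c₀} : Finset ι) ⊆ insert i {c₀} := Finset.subset_insert i _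
  -- the pointwise factorization identity
  have hkey : ∀ (b : (j : (Finset.Iio i : Finset ι)) → α j) (s : α i),
      BCt P Q (insert i (Finset.Iio i)) (insFun b s) *
        BCt P Q {c₀} (fun j => b ⟨j.1, hSpIo j.2⟩) =
        BCt P Q (Finset.Iio i) b *
          BCt P Q (insert i {c₀}) (insFun (fun j => b ⟨j.1, hSpIo j.2⟩) s) := by
    intro b s
    let x : ∀ j, α j := fun j =>
      if h : j ∈ (insert i (Finset.Iio i) : Finset ι) then insFun b s ⟨j, h⟩
      else (hne j).some
    have h1 : (fun j : (insert i (Finset.Iio i) : Finset ι) => x j.1) = insFun b s := by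
      funext j
      exact dif_pos j.2
    have h3 : (fun j : (Finset.Iio i : Finset ι) => x j.1) = b := by
      funext j
      have hj : j.1 ∈ (insert i (Finset.Iio i) : Finset ι) := Finset.mem_insert_of_mem j.2
      have e : x j.1 = insFun b s ⟨j.1, hj⟩ := dif_pos hj
      rw [e]
      show (if h : j.1 = i then _ else b ⟨j.1, _⟩) = b j
      rw [dif_neg (ne_of_lt (Finset.mem_Iio.mp j.2))]
    have h2 : (fun j : ({c₀} : Finset ι) => x j.1) =
        (fun j : ({c₀} : Finset ι) => b ⟨j.1, hSpIo j.2⟩) := by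
      funext j
      exact congrFun h3 ⟨j.1, hSpIo j.2⟩
    have h4 : (fun j : (insert i {c₀} : Finset ι) => x j.1) =
        insFun (fun j : ({c₀} : Finset ι) => b ⟨j.1, hSpIo j.2⟩) s := by
      funext j
      by_cases h : j.1 = i
      · rcases j with ⟨j1, hj⟩
        dsimp only at h
        subst h
        have e1 : x j1 = s := by
          have hj' : j1 ∈ (insert j1 (Finset.Iio j1) : Finset ι) :=
            Finset.mem_insert_self _ _
          have e : x j1 = insFun b s ⟨j1, hj'⟩ := dif_pos hj'
          rw [e]
          exact insFun_self b s
        have e2 : insFun (fun j : ({c₀} : Finset ι) => b ⟨j.1, hSpIo j.2⟩) s ⟨j1, hj⟩ = s :=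
          insFun_self _ s
        rw [e2]
        exact e1
      · have hjc : j.1 ∈ ({c₀} : Finset ι) := (Finset.mem_insert.mp j.2).resolve_left h
        have e2 : insFun (fun j : ({c₀} : Finset ι) => b ⟨j.1, hSpIo j.2⟩) s j =
            b ⟨j.1, hSpIo hjc⟩ := dif_neg h
        rw [e2]
        exact congrFun h3 ⟨j.1, hSpIo hjc⟩
    have hP' := hPf x
    have hQ' := hQf x
    rw [h1, h2, h3, h4] at hP' hQ'
    exact sqrt_cross (marg_nonneg_s5 hP0 _ _) (marg_nonneg_s5 hQ0 _ _)
      (marg_nonneg_s5 hP0 _ _) (marg_nonneg_s5 hQ0 _ _) hP' hQ'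
  have hVv : ∀ z : (j : ({c₀} : Finset ι)) → α j,
      (∑ p ∈ Finset.univ.filter
        (fun p : (j : (insert i {c₀} : Finset ι)) → α j =>
          (fun j : ({c₀} : Finset ι) => p ⟨j.1, hSpT₂ j.2⟩) = z),
        BCt P Q (insert i {c₀}) p) =
      ∑ s : α i, BCt P Q (insert i {c₀}) (insFun z s) :=
    fun z => sum_fiber_insert hiSp z (BCt P Q (insert i {c₀}))
  have main := abstract_step
    (u := BCt P Q (Finset.Iio i))
    (w := BCt P Q {c₀})
    (V := fun z => ∑ p ∈ Finset.univ.filter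
      (fun p : (j : (insert i {c₀} : Finset ι)) → α j =>
        (fun j : ({c₀} : Finset ι) => p ⟨j.1, hSpT₂ j.2⟩) = z), BCt P Q (insert i {c₀}) p)
    (G := fun b s => BCt P Q (insert i (Finset.Iio i)) (insFun b s))
    (vv := fun z s => BCt P Q (insert i {c₀}) (insFun z s))
    (r := fun b => fun j : ({c₀} : Finset ι) => b ⟨j.1, hSpIo j.2⟩)
    (fun b => BCt_nonneg _ _ _ _) (fun z => BCt_nonneg _ _ _ _)
    (fun z => Finset.sum_nonneg fun p _ => BCt_nonneg _ _ _ _)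
    (fun b s => BCt_nonneg _ _ _ _)
    (fun b s => hkey b s)
    (fun z => fiber_CS hP0 hQ0 hSpIo z)
    (fun z => fiber_CS hP0 hQ0 hSpT₂ z)
    hVv
    (BC_le_one hP0 hP1 hQ0 hQ1 {c₀})
  have e1 : ∑ b, BCt P Q (Finset.Iio i) b = BC P Q (Finset.Iio i) := rfl
  have e2 : ∑ z : (j : ({c₀} : Finset ι)) → α j,
      (∑ p ∈ Finset.univ.filter
        (fun p : (j : (insert i {c₀} : Finset ι)) → α j =>
          (fun j : ({c₀} : Finset ι) => p ⟨j.1, hSpT₂ j.2⟩) = z),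
        BCt P Q (insert i {c₀}) p) = BC P Q (insert i {c₀}) :=
    Finset.sum_fiberwise_of_maps_to (fun p _ => Finset.mem_univ _) _
  have e3 : ∑ b : (j : (Finset.Iio i : Finset ι)) → α j,
      (∑ s : α i, BCt P Q (insert i (Finset.Iio i)) (insFun b s)) =
      BC P Q (insert i (Finset.Iio i)) := by
    rw [show BC P Q (insert i (Finset.Iio i)) =
        ∑ y : (j : (insert i (Finset.Iio i) : Finset ι)) → α j,
          BCt P Q (insert i (Finset.Iio i)) y from rfl]
    rw [← Finset.sum_fiberwise_of_maps_to
      (g := fun y : (j : (insert i (Finset.Iio i) : Finset ι)) → α j =>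
        (fun j : (Finset.Iio i : Finset ι) => y ⟨j.1, Finset.mem_insert_of_mem j.2⟩))
      (fun y _ => Finset.mem_univ _)
      (BCt P Q (insert i (Finset.Iio i)))]
    exact Finset.sum_congr rfl fun b _ => (sum_fiber_insert hiIo b _).symm
  rw [e1, e2, e3] at main
  exact main

end StepLemma

section Univ

open scoped Classical

variable {ι : Type*} [Fintype ι] [DecidableEq ι] {α : ι → Type*} [∀ i, Fintype (α i)]

lemma marg_univ {P : (∀ i, α i) → ℝ} (y : (j : (Finset.univ : Finset ι)) → α j) :
    marg P Finset.univ y = P (fun j => y ⟨j, Finset.mem_univ j⟩) := by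
  unfold marg
  rw [Finset.sum_eq_single (fun j => y ⟨j, Finset.mem_univ j⟩)]
  · rw [if_pos fun i => rfl]
  · intro x _ hx
    rw [if_neg]
    intro hc
    exact hx (funext fun j => hc ⟨j, Finset.mem_univ j⟩)
  · intro h
    simp at h

lemma BC_univ (P Q : (∀ i, α i) → ℝ) :
    BC P Q Finset.univ = ∑ x, Real.sqrt (P x * Q x) := by
  unfold BC
  refine (Fintype.sum_equiv
    (⟨fun x (j : (Finset.univ : Finset ι)) => x j.1,
      fun y j => y ⟨j, Finset.mem_univ j⟩, fun x => rfl, fun y => rfl⟩ :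
      (∀ i, α i) ≃ ((j : (Finset.univ : Finset ι)) → α j))
    (fun x => Real.sqrt (P x * Q x))
    (fun y => Real.sqrt (marg P Finset.univ y * marg Q Finset.univ y)) ?_).symm
  intro x
  show Real.sqrt (P x * Q x) = Real.sqrt (marg P Finset.univ _ * marg Q Finset.univ _)
  rw [marg_univ, marg_univ]
  rfl

end Univ

set_option maxHeartbeats 1000000 in
/-- **Squared Hellinger subadditivity for tree-structured distributions (common tree).**
`P` and `Q` are joint distributions on `n = m + 1 ≥ 2` finitely-valued variables with a
common tree structure rooted at `X_0`: the nodes are ordered so each non-root node `i`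
comes after its parent `π i` (`π i < i`), and the tree factorization is expressed
equivalently via marginals: for each `i ≠ 0`, the marginal on `{0,…,i}` times the
marginal on `{π i}` equals the marginal on `{0,…,i-1}` times the marginal on `{π i, i}`,
pointwise.  Then
`H²(P,Q) ≤ H²(P_{X_0},Q_{X_0}) + ∑_{i ≠ 0} H²(P_{X_i,X_{π i}}, Q_{X_i,X_{π i}})`;
in particular, if `H²(P,Q) ≥ ε` then some non-root `i` satisfies
`H²(P_{X_i,X_{π i}}, Q_{X_i,X_{π i}}) ≥ ε / n`. -/
theorem sqHellinger_subadditive_tree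
    {m : ℕ} (hm : 0 < m) (α : Fin (m + 1) → Type*) [∀ i, Fintype (α i)]
    (π : Fin (m + 1) → Fin (m + 1)) (hπ : ∀ i : Fin (m + 1), i ≠ 0 → π i < i)
    (P Q : (∀ i, α i) → ℝ)
    (hP0 : ∀ x, 0 ≤ P x) (hP1 : ∑ x, P x = 1)
    (hQ0 : ∀ x, 0 ≤ Q x) (hQ1 : ∑ x, Q x = 1)
    (hPfac : ∀ i : Fin (m + 1), i ≠ 0 → ∀ x : ∀ j, α j,
      marg P (Finset.Iic i) (fun j => x j.1) * marg P {π i} (fun j => x j.1) =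
        marg P (Finset.Iio i) (fun j => x j.1) * marg P {π i, i} (fun j => x j.1))
    (hQfac : ∀ i : Fin (m + 1), i ≠ 0 → ∀ x : ∀ j, α j,
      marg Q (Finset.Iic i) (fun j => x j.1) * marg Q {π i} (fun j => x j.1) =
        marg Q (Finset.Iio i) (fun j => x j.1) * marg Q {π i, i} (fun j => x j.1)) :
    sqHellinger P Q ≤
        sqHellinger (marg P {(0 : Fin (m + 1))}) (marg Q {(0 : Fin (m + 1))}) +
          ∑ i ∈ Finset.univ.filter (fun i : Fin (m + 1) => i ≠ 0),
            sqHellinger (marg P {i, π i}) (marg Q {i, π i}) ∧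
      ∀ ε : ℝ, sqHellinger P Q ≥ ε →
        ∃ i : Fin (m + 1), i ≠ 0 ∧
          sqHellinger (marg P {i, π i}) (marg Q {i, π i}) ≥ ε / (m + 1 : ℝ) := by
  classical
  -- all fibers are nonempty
  have hnex : Nonempty (∀ i, α i) := by
    by_contra h
    rw [not_nonempty_iff] at h
    rw [Finset.univ_eq_empty, Finset.sum_empty] at hP1
    exact one_ne_zero hP1.symm
  have hne : ∀ j, Nonempty (α j) := fun j => ⟨hnex.some j⟩
  -- per-term identification of Hellinger distances with BC
  have hterm : ∀ i : Fin (m + 1),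
      sqHellinger (marg P {i, π i}) (marg Q {i, π i}) = 1 - BC P Q {π i, i} := by
    intro i
    rw [Finset.pair_comm i (π i)]
    rfl
  have hzero :
      sqHellinger (marg P {(0 : Fin (m + 1))}) (marg Q {(0 : Fin (m + 1))}) =
        1 - BC P Q {(0 : Fin (m + 1))} := rfl
  have hPQ : sqHellinger P Q = 1 - BC P Q Finset.univ := by
    rw [BC_univ]
    rfl
  -- telescoping induction
  have tel : ∀ k : ℕ, ∀ hk : k ≤ m,
      1 - BC P Q (Finset.Iic (⟨k, Nat.lt_succ_of_le hk⟩ : Fin (m + 1))) ≤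
        (1 - BC P Q {(0 : Fin (m + 1))}) +
          ∑ j ∈ Finset.univ.filter
            (fun j : Fin (m + 1) => j ≠ 0 ∧ j ≤ ⟨k, Nat.lt_succ_of_le hk⟩),
            (1 - BC P Q {π j, j}) := by
    intro k
    induction k with
    | zero =>
      intro hk
      have h1 : Finset.Iic (⟨0, Nat.lt_succ_of_le hk⟩ : Fin (m + 1)) =
          {(0 : Fin (m + 1))} := by
        ext j
        simp only [Finset.mem_Iic, Finset.mem_singleton, Fin.le_def, Fin.ext_iff,
          Fin.val_zero]
        show j.1 ≤ 0 ↔ j.1 = 0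
        omega
      have h2 : (Finset.univ.filter
          (fun j : Fin (m + 1) => j ≠ 0 ∧ j ≤ ⟨0, Nat.lt_succ_of_le hk⟩)) = ∅ := by
        refine Finset.filter_false_of_mem fun j _ => ?_
        rintro ⟨hj0, hjle⟩
        refine hj0 ?_
        have h3 : j.1 ≤ 0 := Fin.le_def.mp hjle
        exact Fin.ext (by rw [Fin.val_zero]; omega)
      rw [h1, h2, Finset.sum_empty, add_zero]
    | succ k IH =>
      intro hk
      have hkm : k ≤ m := Nat.le_of_succ_le hk
      set i : Fin (m + 1) := ⟨k + 1, Nat.lt_succ_of_le hk⟩ with hidef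
      have hi0 : i ≠ 0 := by
        rw [hidef, Fin.ne_iff_vne]
        simp
      have hstep := step_ineq P Q hP0 hP1 hQ0 hQ1 hne (hπ i hi0)
        (hPfac i hi0) (hQfac i hi0)
      have hIio : Finset.Iio i = Finset.Iic (⟨k, Nat.lt_succ_of_le hkm⟩ : Fin (m + 1)) := by
        ext j
        simp only [Finset.mem_Iio, Finset.mem_Iic, Fin.lt_def, Fin.le_def, hidef]
        omega
      have hnotmem : i ∉ Finset.univ.filter
          (fun j : Fin (m + 1) => j ≠ 0 ∧ j ≤ ⟨k, Nat.lt_succ_of_le hkm⟩) := by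
        simp only [Finset.mem_filter, Finset.mem_univ, true_and, Fin.le_def, hidef,
          not_and]
        intro _
        show ¬(k + 1 ≤ k)
        omega
      have hfilter : Finset.univ.filter
          (fun j : Fin (m + 1) => j ≠ 0 ∧ j ≤ ⟨k + 1, Nat.lt_succ_of_le hk⟩) =
          insert i (Finset.univ.filter
            (fun j : Fin (m + 1) => j ≠ 0 ∧ j ≤ ⟨k, Nat.lt_succ_of_le hkm⟩)) := by
        ext j
        simp only [Finset.mem_filter, Finset.mem_univ, true_and, Finset.mem_insert,
          Fin.le_def, Fin.ext_iff, Fin.val_zero, hidef, ne_eq]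
        show (¬j.1 = 0 ∧ j.1 ≤ k + 1) ↔ (j.1 = k + 1 ∨ (¬j.1 = 0 ∧ j.1 ≤ k))
        omega
      rw [hfilter, Finset.sum_insert hnotmem]
      have hIH := IH hkm
      rw [← hIio] at hIH
      have : 1 - BC P Q (Finset.Iic i) ≤
          (1 - BC P Q (Finset.Iio i)) + (1 - BC P Q {π i, i}) := by linarith
      linarith
  -- part 1
  have part1 : sqHellinger P Q ≤
      sqHellinger (marg P {(0 : Fin (m + 1))}) (marg Q {(0 : Fin (m + 1))}) +
        ∑ i ∈ Finset.univ.filter (fun i : Fin (m + 1) => i ≠ 0),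
          sqHellinger (marg P {i, π i}) (marg Q {i, π i}) := by
    have hlast := tel m le_rfl
    have hIicm : Finset.Iic (⟨m, Nat.lt_succ_of_le le_rfl⟩ : Fin (m + 1)) =
        Finset.univ := by
      ext j
      simp only [Finset.mem_Iic, Finset.mem_univ, iff_true]
      exact Fin.le_def.mpr (show j.1 ≤ m from by have := j.isLt; omega)
    have hfiltm : Finset.univ.filter
        (fun j : Fin (m + 1) => j ≠ 0 ∧ j ≤ ⟨m, Nat.lt_succ_of_le le_rfl⟩) =
        Finset.univ.filter (fun j : Fin (m + 1) => j ≠ 0) := by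
      refine Finset.filter_congr fun j _ => ?_
      simp only [and_iff_left_iff_imp]
      intro _
      exact Fin.le_def.mpr (show j.1 ≤ m from by have := j.isLt; omega)
    rw [hIicm, hfiltm] at hlast
    rw [hPQ, hzero]
    calc 1 - BC P Q Finset.univ
        ≤ (1 - BC P Q {(0 : Fin (m + 1))}) +
          ∑ j ∈ Finset.univ.filter (fun j : Fin (m + 1) => j ≠ 0),
            (1 - BC P Q {π j, j}) := hlast
      _ = (1 - BC P Q {(0 : Fin (m + 1))}) +
          ∑ j ∈ Finset.univ.filter (fun j : Fin (m + 1) => j ≠ 0),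
            sqHellinger (marg P {j, π j}) (marg Q {j, π j}) := by
          rw [Finset.sum_congr rfl fun j _ => (hterm j).symm]
  refine ⟨part1, ?_⟩
  -- part 2
  intro ε hε
  have h10 : (1 : Fin (m + 1)) ≠ 0 := by
    rw [Fin.ne_iff_vne, Fin.val_one', Fin.val_zero, Nat.mod_eq_of_lt (by omega)]
    omega
  have hπ1 : π 1 = 0 := by
    have h := hπ 1 h10
    have hv : (π 1).1 < (1 : Fin (m + 1)).1 := Fin.lt_def.mp h
    have hone : (1 : Fin (m + 1)).1 = 1 := by
      rw [Fin.val_one', Nat.mod_eq_of_lt (by omega)]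
    refine Fin.ext ?_
    rw [Fin.val_zero]
    omega
  have hterm1 : ∀ i : Fin (m + 1),
      0 ≤ sqHellinger (marg P {i, π i}) (marg Q {i, π i}) := by
    intro i
    rw [hterm i]
    have := BC_le_one hP0 hP1 hQ0 hQ1 (α := α) {π i, i}
    linarith
  have hzero_le : sqHellinger (marg P {(0 : Fin (m + 1))}) (marg Q {(0 : Fin (m + 1))}) ≤
      sqHellinger (marg P {(1 : Fin (m + 1)), π 1}) (marg Q {(1 : Fin (m + 1)), π 1}) := by
    rw [hterm 1, hzero]
    have hsub : ({(0 : Fin (m + 1))} : Finset (Fin (m + 1))) ⊆ {π 1, (1 : Fin (m + 1))} := by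
      rw [hπ1]
      intro j hj
      rw [Finset.mem_singleton] at hj
      rw [hj]
      exact Finset.mem_insert_self _ _
    have := BC_mono hP0 hQ0 hsub
    linarith
  by_cases hεpos : ε ≤ 0
  · refine ⟨1, h10, ?_⟩
    have : ε / (m + 1 : ℝ) ≤ 0 := div_nonpos_iff.mpr (Or.inr ⟨hεpos, by positivity⟩)
    exact le_trans this (hterm1 1)
  · push_neg at hεpos
    by_contra hcon
    push_neg at hcon
    have hsne : (Finset.univ.filter (fun i : Fin (m + 1) => i ≠ 0)).Nonempty :=
      ⟨1, by simp [h10]⟩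
    have hsum : ∑ i ∈ Finset.univ.filter (fun i : Fin (m + 1) => i ≠ 0),
        sqHellinger (marg P {i, π i}) (marg Q {i, π i}) <
        (Finset.univ.filter (fun i : Fin (m + 1) => i ≠ 0)).card • (ε / (m + 1 : ℝ)) := by
      rw [← Finset.sum_const]
      refine Finset.sum_lt_sum_of_nonempty hsne fun i hi => ?_
      exact hcon i (Finset.mem_filter.mp hi).2
    have hcard : (Finset.univ.filter (fun i : Fin (m + 1) => i ≠ 0)).card = m := by
      rw [Finset.filter_ne' Finset.univ (0 : Fin (m + 1))]
      rw [Finset.card_erase_of_mem (Finset.mem_univ _)]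
      simp
    rw [hcard, nsmul_eq_mul] at hsum
    have h1lt : sqHellinger (marg P {(1 : Fin (m + 1)), π 1}) (marg Q {(1 : Fin (m + 1)), π 1})
        < ε / (m + 1 : ℝ) := hcon 1 h10
    have hεm : (m : ℝ) * (ε / (m + 1 : ℝ)) + ε / (m + 1 : ℝ) = ε := by
      field_simp
    have := part1
    have hge : ε ≤ sqHellinger P Q := hε
    linarith
end

section
/- Given any two trees 𝒯_P and 𝒯_Q (connected acyclic simple graphs) on the same set X of n nodes, there exists an ordering X_1, …, X_n of the nodes such that for every i, the set D_{𝒯_P}(X_i) ∪ D_{𝒯_Q}(X_i) has cardinality at most 5. -/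
/-!
For `S ⊆ V`, call `u, v ∈ S` compressed-adjacent in a tree `T` if the `T`-path between them has
no interior vertex in `S`. The dependent set of `X_i` is the compressed neighbourhood of `X_i` in
`S_i = {X_1, …, X_i}`, so it suffices to order the nodes such that each `X_i` has at most `3`
compressed neighbours in `S_i`, counted over both trees.

The compressed graph of a tree on `S` has at most `|S| - 1` edges, so the compressed degrees in the
two trees sum to less than `4|S|` and some `v ∈ S` has at most `3` compressed neighbours in
total; it becomes the last node and we recurse on `S \ {v}`. Only the edge bound is carried
through the recursion: deleting a vertex of compressed degree `d` removes its `d` edges and creates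
at most `d(d-1)/2` new ones among its neighbours, which keeps the bound when `1 ≤ d ≤ 2`.
-/

/-- The *dependent set* `D_G(i)` of the `i`-th node (under the ordering `σ`) with
respect to the graph `G`: the set of indices `k < i` such that the (unique, since `G`
is a tree) path between `σ i` and `σ k` in `G` does not pass through any `σ j` with
`j < i` other than `σ k` itself. -/
def depSet {V : Type*} {n : ℕ} (G : SimpleGraph V) (σ : Fin n ≃ V) (i : Fin n) :
    Set (Fin n) :=
  {k | k < i ∧ ∀ p : G.Walk (σ i) (σ k), p.IsPath →
    ∀ j : Fin n, j < i → σ j ∈ p.support → j = k}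

open Finset

lemma List.Nodup.getElem_mem_take_iff {α : Type*} {l : List α} (hl : l.Nodup) {i j : ℕ}
    (hj : j < l.length) : l[j] ∈ l.take i ↔ j < i := by
  rw [List.mem_take_iff_getElem]
  constructor
  · rintro ⟨k, hk, hkj⟩
    rw [hl.getElem_inj_iff] at hkj
    omega
  · exact fun hji => ⟨j, by omega, rfl⟩

lemma List.forall_getElem_take_concat {α : Type*} {p : List α → α → Prop} {l : List α} {a : α}
    (hl : ∀ i (hi : i < l.length), p (l.take (i + 1)) l[i]) (ha : p (l ++ [a]) a) :
    ∀ i (hi : i < (l ++ [a]).length), p ((l ++ [a]).take (i + 1)) (l ++ [a])[i] := by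
  intro i hi
  rw [List.length_append, List.length_singleton] at hi
  rcases Nat.lt_succ_iff_lt_or_eq.mp hi with hi | rfl
  · rw [List.take_append_of_le_length hi, List.getElem_append_left hi]
    exact hl i hi
  · simpa [List.take_of_length_le] using ha

namespace SimpleGraph

variable {V : Type*} (T : SimpleGraph V)

def CompressedAdj (S : Finset V) (u v : V) : Prop :=
  u ∈ S ∧ v ∈ S ∧ u ≠ v ∧
    ∃ p : T.Walk u v, p.IsPath ∧ ∀ x ∈ p.support, x ≠ u → x ≠ v → x ∉ S

open Classical in
noncomputable def compressedNbrs (S : Finset V) (v : V) : Finset V :=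
  {u ∈ S | T.CompressedAdj S v u}

noncomputable def compressedDegSum (S : Finset V) : ℕ :=
  ∑ v ∈ S, #(T.compressedNbrs S v)

variable {T} {S : Finset V} {u v w : V}

lemma CompressedAdj.symm (h : T.CompressedAdj S u v) : T.CompressedAdj S v u := by
  obtain ⟨hu, hv, hne, p, hp, hint⟩ := h
  exact ⟨hv, hu, hne.symm, p.reverse, hp.reverse,
    fun x hx hxv hxu => hint x (by simpa using hx) hxu hxv⟩

lemma mem_compressedNbrs : u ∈ T.compressedNbrs S v ↔ T.CompressedAdj S v u := by
  simp only [compressedNbrs, mem_filter]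
  exact ⟨And.right, fun h => ⟨h.2.1, h⟩⟩

lemma mem_compressedNbrs_comm : u ∈ T.compressedNbrs S v ↔ v ∈ T.compressedNbrs S u := by
  simp only [mem_compressedNbrs]
  exact ⟨CompressedAdj.symm, CompressedAdj.symm⟩

lemma compressedNbrs_subset_erase [DecidableEq V] : T.compressedNbrs S v ⊆ S.erase v := by
  intro u hu
  obtain ⟨-, hu, hvu, -⟩ := mem_compressedNbrs.mp hu
  exact mem_erase.mpr ⟨hvu.symm, hu⟩

lemma compressedAdj_univ_iff [Fintype V] : T.CompressedAdj univ u v ↔ T.Adj u v := by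
  constructor
  · rintro ⟨-, -, hne, p, hp, hint⟩
    cases p with
    | nil => exact absurd rfl hne
    | @cons _ x _ hadj q =>
      have hxu : x ≠ u := fun h => ((Walk.cons_isPath_iff _ _).mp hp).2 (h ▸ q.start_mem_support)
      by_cases hxv : x = v
      · exact hxv ▸ hadj
      · exact absurd (mem_univ x) (hint x (by simp) hxu hxv)
  · intro h
    refine ⟨mem_univ _, mem_univ _, h.ne, h.toWalk, h.isPath_toWalk, fun x hx hxu hxv => ?_⟩
    simp_all

lemma IsTree.compressedDegSum_univ [Fintype V] (hT : T.IsTree) :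
    T.compressedDegSum univ = 2 * (Fintype.card V - 1) := by
  classical
  have hnbrs (v : V) : T.compressedNbrs univ v = T.neighborFinset v := by
    ext u
    simp [mem_compressedNbrs, compressedAdj_univ_iff]
  have hedges := hT.card_edgeFinset
  rw [compressedDegSum, sum_congr rfl fun v _ => by rw [hnbrs, card_neighborFinset_eq_degree],
    sum_degrees_eq_twice_card_edges]
  omega

lemma Connected.compressedNbrs_nonempty (hT : T.Connected) (hu : u ∈ S) (hw : w ∈ S)
    (hne : u ≠ w) : (T.compressedNbrs S u).Nonempty := by
  classical
  obtain ⟨p, hp⟩ := (hT.preconnected u w).exists_isPath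
  induction hl : p.length using Nat.strong_induction_on generalizing w with
  | _ m ih =>
    by_cases hint : ∃ x ∈ p.support, x ≠ u ∧ x ≠ w ∧ x ∈ S
    · obtain ⟨x, hx, hxu, hxw, hxS⟩ := hint
      have hlt : (p.takeUntil x hx).length < m := hl ▸ Walk.length_takeUntil_lt_length hx hxw
      exact ih _ hlt hxS hxu.symm _ (hp.takeUntil hx) rfl
    · exact ⟨w, mem_compressedNbrs.mpr ⟨hu, hw, hne, p, hp,
        fun x hx hxu hxw hxS => hint ⟨x, hx, hxu, hxw, hxS⟩⟩⟩

section Erase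

variable [DecidableEq V]

lemma compressedAdj_of_mem_support {p : T.Walk u w} (hp : p.IsPath)
    (hint : ∀ x ∈ p.support, x ≠ u → x ≠ w → x ∉ S.erase v) (hu : u ∈ S) (hv : v ∈ S)
    (huv : u ≠ v) (hvw : v ≠ w) (hvp : v ∈ p.support) : T.CompressedAdj S u v :=
  ⟨hu, hv, huv, _, hp.takeUntil hvp, fun x hx hxu hxv hxS =>
    hint x (p.support_takeUntil_subset_support hvp hx) hxu
      (fun hxw => Walk.endpoint_notMem_support_takeUntil hp hvp hvw.symm (hxw ▸ hx))
      (mem_erase.mpr ⟨hxv, hxS⟩)⟩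

lemma CompressedAdj.of_erase (hv : v ∈ S) (h : T.CompressedAdj (S.erase v) u w) :
    T.CompressedAdj S u w ∨ T.CompressedAdj S u v ∧ T.CompressedAdj S v w := by
  obtain ⟨hu, hw, hne, p, hp, hint⟩ := h
  rw [mem_erase] at hu hw
  by_cases hvp : v ∈ p.support
  · refine Or.inr ⟨compressedAdj_of_mem_support hp hint hu.2 hv hu.1 hw.1.symm hvp,
      (compressedAdj_of_mem_support hp.reverse ?_ hw.2 hv hw.1 hu.1.symm
        (by simpa using hvp)).symm⟩
    intro x hx hxw hxu
    exact hint x (by simpa using hx) hxu hxw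
  · exact Or.inl ⟨hu.2, hw.2, hne, p, hp, fun x hx hxu hxw hxS =>
      hint x hx hxu hxw (mem_erase.mpr ⟨fun hxv => hvp (hxv ▸ hx), hxS⟩)⟩

/-- Deleting `v` from `S` can only join two former neighbours of `v`. -/
lemma card_compressedNbrs_erase_le (hv : v ∈ S) (u : V) :
    #(T.compressedNbrs (S.erase v) u) ≤ #((T.compressedNbrs S u).erase v) +
      if u ∈ T.compressedNbrs S v then #(T.compressedNbrs S v) - 1 else 0 := by
  have hsub : T.compressedNbrs (S.erase v) u ⊆ (T.compressedNbrs S u).erase v ∪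
      if u ∈ T.compressedNbrs S v then (T.compressedNbrs S v).erase u else ∅ := by
    intro w hw
    have hwv : w ≠ v := (mem_erase.mp (mem_compressedNbrs.mp hw).2.1).1
    rcases (mem_compressedNbrs.mp hw).of_erase hv with h | ⟨huv, hvw⟩
    · exact mem_union_left _ (mem_erase.mpr ⟨hwv, mem_compressedNbrs.mpr h⟩)
    · rw [if_pos (mem_compressedNbrs.mpr huv.symm)]
      exact mem_union_right _
        (mem_erase.mpr ⟨(mem_compressedNbrs.mp hw).2.2.1.symm, mem_compressedNbrs.mpr hvw⟩)
  refine (card_le_card hsub).trans ((card_union_le _ _).trans ?_)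
  split_ifs with h
  · rw [card_erase_of_mem h]
  · simp

lemma compressedDegSum_erase_add_le (hv : v ∈ S) :
    T.compressedDegSum (S.erase v) + 2 * #(T.compressedNbrs S v) ≤
      T.compressedDegSum S + #(T.compressedNbrs S v) * (#(T.compressedNbrs S v) - 1) := by
  set N := T.compressedNbrs S v
  have hNv : {u ∈ S | v ∈ T.compressedNbrs S u} = N := by
    ext u
    rw [mem_filter, mem_compressedNbrs_comm]
    exact ⟨And.right, fun h => ⟨mem_of_mem_erase (compressedNbrs_subset_erase h), h⟩⟩
  have herase : ∑ u ∈ S, #((T.compressedNbrs S u).erase v) + #N = T.compressedDegSum S := by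
    rw [← hNv, card_filter, ← sum_add_distrib, compressedDegSum]
    refine sum_congr rfl fun u _ => ?_
    split_ifs with h
    · exact card_erase_add_one h
    · rw [erase_eq_of_notMem h, add_zero]
  have hvN : v ∉ N := fun h => (mem_compressedNbrs.mp h).2.2.1 rfl
  have hbound : T.compressedDegSum (S.erase v) ≤
      ∑ u ∈ S.erase v, #((T.compressedNbrs S u).erase v) + #N * (#N - 1) := by
    calc T.compressedDegSum (S.erase v)
        ≤ ∑ u ∈ S.erase v, (#((T.compressedNbrs S u).erase v) +
            if u ∈ N then #N - 1 else 0) := sum_le_sum fun u _ => card_compressedNbrs_erase_le hv u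
      _ = _ := by
        rw [sum_add_distrib, sum_ite_mem, inter_eq_right.mpr compressedNbrs_subset_erase,
          sum_const, smul_eq_mul]
  have := sum_erase_add S (fun u => #((T.compressedNbrs S u).erase v)) hv
  rw [erase_eq_of_notMem hvN] at this
  omega

lemma Connected.compressedNbrs_nonempty_or_erase_eq_empty (hT : T.Connected) (hv : v ∈ S) :
    (T.compressedNbrs S v).Nonempty ∨ S.erase v = ∅ := by
  rcases (S.erase v).eq_empty_or_nonempty with h | ⟨w, hw⟩
  · exact Or.inr h
  · exact Or.inl (hT.compressedNbrs_nonempty hv (mem_of_mem_erase hw) (ne_of_mem_erase hw).symm)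

/-- `2 * (#S - 1)` is the degree sum of a tree on `S`; the truncated subtraction makes the bound
trivial for `S = ∅`. -/
lemma Connected.compressedDegSum_erase_le (hT : T.Connected) (hv : v ∈ S)
    (hdeg : #(T.compressedNbrs S v) ≤ 2) (hS : T.compressedDegSum S ≤ 2 * (#S - 1)) :
    T.compressedDegSum (S.erase v) ≤ 2 * (#(S.erase v) - 1) := by
  rcases hT.compressedNbrs_nonempty_or_erase_eq_empty hv with hne | hempty
  · have hpos := card_pos.mpr hne
    have hquad : #(T.compressedNbrs S v) * (#(T.compressedNbrs S v) - 1) + 2 ≤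
        2 * #(T.compressedNbrs S v) := by
      interval_cases #(T.compressedNbrs S v) <;> norm_num
    have := compressedDegSum_erase_add_le (T := T) hv
    rw [card_erase_of_mem hv]
    omega
  · simp [hempty, compressedDegSum]

lemma Connected.card_compressedNbrs_le_two {P : SimpleGraph V} (hT : T.Connected) (hv : v ∈ S)
    (h : #(P.compressedNbrs S v) + #(T.compressedNbrs S v) ≤ 3) :
    #(P.compressedNbrs S v) ≤ 2 := by
  rcases hT.compressedNbrs_nonempty_or_erase_eq_empty hv with hne | hempty
  · have := card_pos.mpr hne
    omega
  · have := card_le_card (compressedNbrs_subset_erase (T := P) (v := v) (S := S))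
    rw [hempty, card_empty] at this
    omega

end Erase

lemma exists_card_compressedNbrs_add_le_three {P Q : SimpleGraph V} (hS : S.Nonempty)
    (hP : P.compressedDegSum S ≤ 2 * (#S - 1)) (hQ : Q.compressedDegSum S ≤ 2 * (#S - 1)) :
    ∃ v ∈ S, #(P.compressedNbrs S v) + #(Q.compressedNbrs S v) ≤ 3 := by
  have hcard := card_pos.mpr hS
  have hsum : ∑ v ∈ S, (#(P.compressedNbrs S v) + #(Q.compressedNbrs S v)) < ∑ _v ∈ S, 4 := by
    rw [sum_add_distrib, sum_const, smul_eq_mul]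
    unfold compressedDegSum at hP hQ
    omega
  obtain ⟨v, hv, hlt⟩ := exists_lt_of_sum_lt hsum
  exact ⟨v, hv, Nat.le_of_lt_succ hlt⟩

section Ordering

variable [DecidableEq V] {P Q : SimpleGraph V}

theorem exists_list_card_compressedNbrs_add_le_three (hP : P.Connected) (hQ : Q.Connected)
    (S : Finset V) (hPS : P.compressedDegSum S ≤ 2 * (#S - 1))
    (hQS : Q.compressedDegSum S ≤ 2 * (#S - 1)) :
    ∃ l : List V, l.Nodup ∧ l.toFinset = S ∧ ∀ i (hi : i < l.length),
      #(P.compressedNbrs (l.take (i + 1)).toFinset l[i]) +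
        #(Q.compressedNbrs (l.take (i + 1)).toFinset l[i]) ≤ 3 := by
  induction S using Finset.strongInduction with
  | _ S ih =>
    rcases S.eq_empty_or_nonempty with rfl | hne
    · exact ⟨[], List.nodup_nil, rfl, fun i hi => absurd hi (Nat.not_lt_zero i)⟩
    obtain ⟨v, hv, hdeg⟩ := exists_card_compressedNbrs_add_le_three hne hPS hQS
    obtain ⟨l, hnd, hl, hbound⟩ := ih _ (erase_ssubset hv)
      (hP.compressedDegSum_erase_le hv (hQ.card_compressedNbrs_le_two hv hdeg) hPS)
      (hQ.compressedDegSum_erase_le hv (hP.card_compressedNbrs_le_two hv (by omega)) hQS)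
    have hvl : v ∉ l := by simp [← List.mem_toFinset, hl]
    have hS : (l ++ [v]).toFinset = S := by simp [hl, insert_erase hv]
    refine ⟨l ++ [v], hnd.append (List.nodup_singleton v) (by simpa using hvl), hS,
      List.forall_getElem_take_concat (p := fun l w =>
        #(P.compressedNbrs l.toFinset w) + #(Q.compressedNbrs l.toFinset w) ≤ 3) hbound ?_⟩
    simpa [hS] using hdeg

end Ordering

end SimpleGraph

section DependentSets

open SimpleGraph

variable {V : Type*} {n : ℕ} {σ : Fin n ≃ V} {i : Fin n} {S : Finset V}

lemma depSet_subset_preimage_compressedNbrs {T : SimpleGraph V} (hT : T.Connected)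
    (hS : ∀ j, σ j ∈ S ↔ j ≤ i) : depSet T σ i ⊆ σ ⁻¹' T.compressedNbrs S (σ i) := by
  rintro k ⟨hki, hk⟩
  obtain ⟨p, hp⟩ := (hT.preconnected (σ i) (σ k)).exists_isPath
  refine mem_compressedNbrs.mpr ⟨(hS i).mpr le_rfl, (hS k).mpr hki.le,
    σ.injective.ne hki.ne', p, hp, fun x hx hxi hxk hxS => ?_⟩
  obtain ⟨j, rfl⟩ := σ.surjective x
  rcases ((hS j).mp hxS).lt_or_eq with hji | rfl
  · exact hxk (congrArg σ (hk p hp j hji hx))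
  · exact hxi rfl

lemma ncard_depSet_union_le {P Q : SimpleGraph V} (hP : P.Connected) (hQ : Q.Connected)
    (hS : ∀ j, σ j ∈ S ↔ j ≤ i) :
    (depSet P σ i ∪ depSet Q σ i).ncard ≤
      #(P.compressedNbrs S (σ i)) + #(Q.compressedNbrs S (σ i)) := by
  classical
  have hsub : depSet P σ i ∪ depSet Q σ i ⊆
      σ ⁻¹' ↑(P.compressedNbrs S (σ i) ∪ Q.compressedNbrs S (σ i)) := by
    rw [coe_union, Set.preimage_union]
    exact Set.union_subset_union (depSet_subset_preimage_compressedNbrs hP hS)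
      (depSet_subset_preimage_compressedNbrs hQ hS)
  calc (depSet P σ i ∪ depSet Q σ i).ncard
      ≤ (σ ⁻¹' ↑(P.compressedNbrs S (σ i) ∪ Q.compressedNbrs S (σ i))).ncard :=
        Set.ncard_le_ncard hsub (Set.toFinite _)
    _ = #(P.compressedNbrs S (σ i) ∪ Q.compressedNbrs S (σ i)) := by
        rw [Set.ncard_preimage_of_injective_subset_range σ.injective (by simp),
          Set.ncard_coe_finset]
    _ ≤ _ := card_union_le _ _

end DependentSets

/-- **Ordering lemma for two trees.**
Given two trees `TP` and `TQ` on the same set of `n` nodes, the nodes can be ordered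
(via a bijection `σ : Fin n ≃ V`) so that for every `i` the set
`D_{TP}(X_i) ∪ D_{TQ}(X_i)` has cardinality at most `5`. -/
theorem two_trees_ordering {V : Type*} [Fintype V]
    (TP TQ : SimpleGraph V) (hTP : TP.IsTree) (hTQ : TQ.IsTree)
    {n : ℕ} (hn : n = Fintype.card V) :
    ∃ σ : Fin n ≃ V, ∀ i : Fin n,
      (depSet TP σ i ∪ depSet TQ σ i).ncard ≤ 5 := by
  classical
  obtain ⟨l, hnd, hl, hbound⟩ := SimpleGraph.exists_list_card_compressedNbrs_add_le_three
    hTP.connected hTQ.connected univ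
    (by rw [hTP.compressedDegSum_univ, card_univ]) (by rw [hTQ.compressedDegSum_univ, card_univ])
  have hmem (x : V) : x ∈ l := by simp [← List.mem_toFinset, hl]
  have hlen : l.length = n := by rw [hn, ← List.toFinset_card_of_nodup hnd, hl, card_univ]
  let σ : Fin n ≃ V := (finCongr hlen.symm).trans (List.Nodup.getEquivOfForallMemList l hnd hmem)
  refine ⟨σ, fun i => ?_⟩
  have hS (j : Fin n) : σ j ∈ (l.take (i + 1)).toFinset ↔ j ≤ i := by
    change l[(j : ℕ)] ∈ _ ↔ _
    rw [List.mem_toFinset, hnd.getElem_mem_take_iff, Fin.le_def]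
    omega
  calc (depSet TP σ i ∪ depSet TQ σ i).ncard
      ≤ _ := ncard_depSet_union_le hTP.connected hTQ.connected hS
    _ ≤ 3 := hbound i (by omega)
    _ ≤ 5 := by norm_num
end

section
/- Suppose P and Q are tree-structured joint distributions on the same set X of n finitely-valued variables, i.e. P is Markov with respect to a tree 𝒯_P on X and Q is Markov with respect to a tree 𝒯_Q on X, where the two trees may be distinct. Then there exists an ordering of the nodes into X_1, …, X_n and sets Π_i ⊆ {1, …, i−1} of cardinality at most 5 for all i, such that P and Q admit the common factorization P(x) = P_{X_1}(x_1)·∏_{i=2}^{n} P_{X_i | X_{Π_i}}(x_i | x_{Π_i}) and Q(x) = Q_{X_1}(x_1)·∏_{i=2}^{n} Q_{X_i | X_{Π_i}}(x_i | x_{Π_i}). -/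
/-- A joint distribution `P` on finitely-valued variables indexed by the vertices of a
graph `T` is *Markov with respect to `T`* if, whenever a set `S` of vertices separates
vertex sets `A` and `B` in `T` (every walk from a point of `A` to a point of `B` meets
`S`), the variables `X_A` and `X_B` are conditionally independent given `X_S` under
`P`, expressed pointwise via marginals:
`P_{A∪B∪S} · P_S = P_{A∪S} · P_{B∪S}`. -/
def IsTreeMarkov {V : Type*} [Fintype V] [DecidableEq V] {α : V → Type*}
    [∀ v, Fintype (α v)] (T : SimpleGraph V) (P : (∀ v, α v) → ℝ) : Prop :=
  ∀ A B S : Finset V,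
    (∀ a ∈ A, ∀ b ∈ B, ∀ p : T.Walk a b, ∃ s ∈ S, s ∈ p.support) →
    ∀ x : ∀ v, α v,
      marg P (A ∪ B ∪ S) (fun v => x v.1) * marg P S (fun v => x v.1) =
        marg P (A ∪ S) (fun v => x v.1) * marg P (B ∪ S) (fun v => x v.1)

/-! For a tree `T` and a vertex set `W`, call `w ∈ W` visible from `v ∈ W` when the tree path
from `v` to `w` meets `W` only at its ends. The vertices visible from `v` separate `v` from the
rest of `W` in `T`, so under a `T`-Markov distribution they can serve as the parents of `v`
when `v` comes last in an ordering of `W`.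

Visibility is symmetric, and deleting a vertex `v` with `d ≤ 2` visible vertices can create new
visibilities only among those `d` vertices, so the visible degree sum drops by at least
`2d - d(d - 1) ≥ 2`. On `W = V` the sum is `2|V| - 2`, hence the bound `2|W| - 2` is kept
along an elimination in which each deleted vertex has at most two visible vertices in both
trees; such a vertex exists by averaging, since each visible degree is positive once
`|W| ≥ 2`. Listing the deleted vertices backwards gives the ordering, the parents of a vertex
being the at most four vertices visible from it in either tree. -/

open Finset

namespace SimpleGraph.IsTree

variable {V : Type*} {T : SimpleGraph V} (hT : T.IsTree)

noncomputable def path (a b : V) : T.Walk a b :=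
  (hT.existsUnique_path a b).choose

lemma isPath_path (a b : V) : (hT.path a b).IsPath :=
  (hT.existsUnique_path a b).choose_spec.1

variable {hT}

lemma eq_path {a b : V} {p : T.Walk a b} (hp : p.IsPath) : p = hT.path a b :=
  (hT.existsUnique_path a b).unique hp (hT.isPath_path a b)

lemma reverse_path (a b : V) : (hT.path a b).reverse = hT.path b a :=
  eq_path (hT.isPath_path a b).reverse

lemma mem_support_path_comm {a b x : V} :
    x ∈ (hT.path a b).support ↔ x ∈ (hT.path b a).support := by
  rw [← reverse_path, Walk.support_reverse, List.mem_reverse]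

lemma support_path_subset {a b : V} (p : T.Walk a b) :
    (hT.path a b).support ⊆ p.support := by
  classical
  rw [← eq_path p.bypass_isPath]
  exact p.support_bypass_subset_support

lemma support_path_subset_left {a b x : V} (hx : x ∈ (hT.path a b).support) :
    (hT.path a x).support ⊆ (hT.path a b).support := by
  classical
  rw [← eq_path ((hT.isPath_path a b).takeUntil hx)]
  exact Walk.support_takeUntil_subset_support _ hx

lemma support_path_subset_right {a b x : V} (hx : x ∈ (hT.path a b).support) :
    (hT.path x b).support ⊆ (hT.path a b).support := by
  classical
  rw [← eq_path ((hT.isPath_path a b).dropUntil hx)]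
  exact Walk.support_dropUntil_subset_support _ hx

lemma length_path_add_length_path {a b x : V} (hx : x ∈ (hT.path a b).support) :
    (hT.path a x).length + (hT.path x b).length = (hT.path a b).length := by
  classical
  have hp := hT.isPath_path a b
  rw [← eq_path (hp.takeUntil hx), ← eq_path (hp.dropUntil hx), ← Walk.length_append,
    Walk.take_spec]

lemma eq_of_mem_support_path_of_mem {a b x : V} (hx : x ∈ (hT.path a b).support)
    (hb : b ∈ (hT.path a x).support) : x = b := by
  have h₁ := length_path_add_length_path hx
  have h₂ := length_path_add_length_path hb
  exact Walk.eq_of_length_eq_zero (p := hT.path x b) (by omega)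

variable [DecidableEq V]

open scoped Classical in
noncomputable def visibleIn (hT : T.IsTree) (W : Finset V) (v : V) : Finset V :=
  {w ∈ W.erase v | ∀ u ∈ W, u ∈ (hT.path v w).support → u = v ∨ u = w}

lemma mem_visibleIn {W : Finset V} {v w : V} :
    w ∈ hT.visibleIn W v ↔
      w ∈ W ∧ w ≠ v ∧ ∀ u ∈ W, u ∈ (hT.path v w).support → u = v ∨ u = w := by
  simp only [visibleIn, mem_filter, mem_erase]
  tauto

lemma visibleIn_subset_erase (W : Finset V) (v : V) : hT.visibleIn W v ⊆ W.erase v :=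
  Finset.filter_subset _ _

lemma mem_visibleIn_symm {W : Finset V} {v w : V} (hv : v ∈ W) (h : w ∈ hT.visibleIn W v) :
    v ∈ hT.visibleIn W w := by
  rw [mem_visibleIn] at h ⊢
  obtain ⟨-, hwv, hsee⟩ := h
  exact ⟨hv, hwv.symm, fun u hu hpath => (hsee u hu (mem_support_path_comm.1 hpath)).symm⟩

lemma exists_mem_visibleIn_mem_support_path {W : Finset V} {v b : V} (hb : b ∈ W)
    (hbv : b ≠ v) : ∃ s ∈ hT.visibleIn W v, s ∈ (hT.path v b).support := by
  induction h : (hT.path v b).length using Nat.strong_induction_on generalizing b with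
  | _ n ih =>
  by_cases hvis : b ∈ hT.visibleIn W v
  · exact ⟨b, hvis, Walk.end_mem_support _⟩
  obtain ⟨u, huW, hu, huv, hub⟩ :
      ∃ u ∈ W, u ∈ (hT.path v b).support ∧ u ≠ v ∧ u ≠ b := by
    simpa [mem_visibleIn, hb, hbv] using hvis
  have hlen := length_path_add_length_path hu
  have hub' : (hT.path u b).length ≠ 0 := fun h0 => hub (Walk.eq_of_length_eq_zero h0)
  obtain ⟨s, hs, hsu⟩ := ih _ (by omega) huW huv rfl
  exact ⟨s, hs, support_path_subset_left hu hsu⟩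

lemma visibleIn_univ [Fintype V] [DecidableRel T.Adj] (v : V) :
    hT.visibleIn univ v = T.neighborFinset v := by
  ext w
  simp only [mem_visibleIn, mem_univ, true_and, mem_neighborFinset, forall_const]
  constructor
  · rintro ⟨hwv, hsee⟩
    generalize hT.path v w = p at hsee
    cases p with
    | nil => exact absurd rfl hwv
    | @cons _ y _ h q =>
      rcases hsee y (by simp) with h' | rfl
      · exact absurd h' h.ne.symm
      · exact h
  · intro h
    refine ⟨h.ne.symm, fun u hu => ?_⟩
    rw [← eq_path (Walk.IsPath.nil.cons (by simpa using h.ne) : (Walk.cons h .nil).IsPath)] at hu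
    simpa using hu

lemma visibleIn_nonempty {W : Finset V} {v : V} (h : (W.erase v).Nonempty) :
    (hT.visibleIn W v).Nonempty := by
  obtain ⟨b, hb⟩ := h
  obtain ⟨s, hs, -⟩ := exists_mem_visibleIn_mem_support_path (hT := hT)
    (mem_erase.1 hb).2 (mem_erase.1 hb).1
  exact ⟨s, hs⟩

lemma mem_visibleIn_or_of_mem_visibleIn_erase {W : Finset V} {u v w : V} (hu : u ∈ W.erase v)
    (hw : w ∈ hT.visibleIn (W.erase v) u) :
    w ∈ hT.visibleIn W u ∨ (u ∈ hT.visibleIn W v ∧ w ∈ hT.visibleIn W v) := by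
  obtain ⟨huv, huW⟩ := mem_erase.1 hu
  rw [mem_visibleIn] at hw
  obtain ⟨hwW', hwu, hsee⟩ := hw
  obtain ⟨hwv, hwW⟩ := mem_erase.1 hwW'
  have hsee' : ∀ x ∈ W, x ∈ (hT.path u w).support → x = v ∨ x = u ∨ x = w :=
    fun x hx hpath => (eq_or_ne x v).imp_right fun hxv => hsee x (mem_erase.2 ⟨hxv, hx⟩) hpath
  by_cases hv : v ∈ (hT.path u w).support
  · refine .inr ⟨mem_visibleIn.2 ⟨huW, huv, fun x hx hpath => ?_⟩,
      mem_visibleIn.2 ⟨hwW, hwv, fun x hx hpath => ?_⟩⟩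
    · rw [mem_support_path_comm] at hpath
      rcases hsee' x hx (support_path_subset_left hv hpath) with h | h | rfl
      · exact .inl h
      · exact .inr h
      · exact absurd (eq_of_mem_support_path_of_mem hv hpath) hwv.symm
    · rcases hsee' x hx (support_path_subset_right hv hpath) with h | rfl | h
      · exact .inl h
      · rw [mem_support_path_comm] at hv hpath
        exact absurd (eq_of_mem_support_path_of_mem hv hpath) huv.symm
      · exact .inr h
  · refine .inl (mem_visibleIn.2 ⟨hwW, hwu, fun x hx hpath => ?_⟩)
    rcases hsee' x hx hpath with rfl | h
    · exact absurd hpath hv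
    · exact h

lemma card_visibleIn_erase_add_le {W : Finset V} {u v : V} (hv : v ∈ W) (hu : u ∈ W.erase v) :
    #(hT.visibleIn (W.erase v) u) + (if u ∈ hT.visibleIn W v then 1 else 0) ≤
      #(hT.visibleIn W u) + (if u ∈ hT.visibleIn W v then #(hT.visibleIn W v) - 1 else 0) := by
  split_ifs with h
  · have hvu : v ∈ hT.visibleIn W u := mem_visibleIn_symm hv h
    have hsub : hT.visibleIn (W.erase v) u ⊆
        (hT.visibleIn W u).erase v ∪ (hT.visibleIn W v).erase u := by
      intro w hw
      obtain ⟨hwu, hwv⟩ := mem_erase.1 (visibleIn_subset_erase _ _ hw)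
      rcases mem_visibleIn_or_of_mem_visibleIn_erase hu hw with h₁ | ⟨-, h₂⟩
      · exact mem_union_left _ (mem_erase.2 ⟨(mem_erase.1 hwv).1, h₁⟩)
      · exact mem_union_right _ (mem_erase.2 ⟨hwu, h₂⟩)
    have hcard := (card_le_card hsub).trans (card_union_le _ _)
    rw [card_erase_of_mem hvu, card_erase_of_mem h] at hcard
    have := card_pos.2 ⟨v, hvu⟩
    omega
  · refine Nat.add_le_add_right (card_le_card fun w hw => ?_) 0
    exact (mem_visibleIn_or_of_mem_visibleIn_erase hu hw).resolve_right fun h' => h h'.1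

noncomputable def visibleDegSum (hT : T.IsTree) (W : Finset V) : ℕ :=
  ∑ u ∈ W, #(hT.visibleIn W u)

/-- With truncated subtraction this also covers `W = {v}`, where both sides are `0`. -/
lemma visibleDegSum_erase_le {W : Finset V} {v : V} (hv : v ∈ W)
    (hd : #(hT.visibleIn W v) ≤ 2) :
    hT.visibleDegSum (W.erase v) ≤ hT.visibleDegSum W - 2 := by
  rcases (W.erase v).eq_empty_or_nonempty with hW | hW
  · simp [visibleDegSum, hW]
  have hsum := sum_le_sum fun u (hu : u ∈ W.erase v) =>
    card_visibleIn_erase_add_le (hT := hT) hv hu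
  have htotal : ∑ u ∈ W.erase v, #(hT.visibleIn W u) + #(hT.visibleIn W v) =
      hT.visibleDegSum W :=
    sum_erase_add W _ hv
  set d := #(hT.visibleIn W v)
  have hd₁ : 1 ≤ d := card_pos.2 (visibleIn_nonempty hW)
  have hsum_ite :
      ∀ c : ℕ, ∑ u ∈ W.erase v, (if u ∈ hT.visibleIn W v then c else 0) = d * c := by
    intro c
    rw [sum_ite_mem, inter_eq_right.2 (visibleIn_subset_erase W v), sum_const, smul_eq_mul]
  rw [sum_add_distrib, sum_add_distrib, hsum_ite, hsum_ite] at hsum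
  have hdd : d * (d - 1) + 2 ≤ 2 * d := by interval_cases d <;> omega
  simp only [visibleDegSum] at htotal ⊢
  omega

lemma visibleDegSum_univ [Fintype V] :
    hT.visibleDegSum univ = 2 * Fintype.card V - 2 := by
  classical
  simp only [visibleDegSum, visibleIn_univ, card_neighborFinset_eq_degree]
  rw [sum_degrees_eq_twice_card_edges]
  have := hT.card_edgeFinset
  omega

end SimpleGraph.IsTree

open SimpleGraph

section TwoTrees

variable {V : Type*} [DecidableEq V] {TP TQ : SimpleGraph V} (hTP : TP.IsTree) (hTQ : TQ.IsTree)

lemma exists_mem_card_visibleIn_le_two {W : Finset V} (hW : W.Nonempty)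
    (hP : hTP.visibleDegSum W ≤ 2 * #W - 2) (hQ : hTQ.visibleDegSum W ≤ 2 * #W - 2) :
    ∃ v ∈ W, #(hTP.visibleIn W v) ≤ 2 ∧ #(hTQ.visibleIn W v) ≤ 2 := by
  by_contra! hhigh
  obtain ⟨v, hv⟩ := hW
  have hW₂ : 2 ≤ #W := by
    by_contra! hW₁
    have hempty : W.erase v = ∅ := card_eq_zero.1 (by rw [card_erase_of_mem hv]; omega)
    have hP₀ := card_le_card (hTP.visibleIn_subset_erase W v)
    have hQ₀ := card_le_card (hTQ.visibleIn_subset_erase W v)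
    rw [hempty, card_empty] at hP₀ hQ₀
    exact absurd (hhigh v hv (by omega)) (by omega)
  have hfour : ∀ u ∈ W, 4 ≤ #(hTP.visibleIn W u) + #(hTQ.visibleIn W u) := by
    intro u hu
    have hne : (W.erase u).Nonempty := by
      rw [← card_pos, card_erase_of_mem hu]
      omega
    have := card_pos.2 (hTP.visibleIn_nonempty hne)
    have := card_pos.2 (hTQ.visibleIn_nonempty hne)
    have := hhigh u hu
    omega
  have hsum := card_nsmul_le_sum W _ 4 hfour
  rw [sum_add_distrib, smul_eq_mul] at hsum
  simp only [IsTree.visibleDegSum] at hP hQ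
  omega

theorem exists_elimination_order (k : ℕ) (W : Finset V) (hW : #W = k)
    (hP : hTP.visibleDegSum W ≤ 2 * k - 2) (hQ : hTQ.visibleDegSum W ≤ 2 * k - 2) :
    ∃ e : Fin k ↪ V, Set.range e = W ∧ ∀ i,
      #(hTP.visibleIn ((Iic i).image e) (e i)) ≤ 2 ∧
        #(hTQ.visibleIn ((Iic i).image e) (e i)) ≤ 2 := by
  induction k generalizing W with
  | zero =>
    refine ⟨Function.Embedding.ofIsEmpty, ?_, fun i => i.elim0⟩
    simp [card_eq_zero.1 hW]
  | succ k ih =>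
    obtain ⟨v, hv, hPv, hQv⟩ :=
      exists_mem_card_visibleIn_le_two hTP hTQ (card_pos.1 (by omega)) (hW ▸ hP) (hW ▸ hQ)
    have hW' : #(W.erase v) = k := by rw [card_erase_of_mem hv, hW]; rfl
    obtain ⟨e, he, hlow⟩ := ih (W.erase v) hW'
      (by have := hTP.visibleDegSum_erase_le hv hPv; omega)
      (by have := hTQ.visibleDegSum_erase_le hv hQv; omega)
    have hve : v ∉ Set.range e := by simp [he]
    have he' : Set.range (Fin.Embedding.snoc e hve) = W := by
      rw [Fin.Embedding.coe_snoc, Fin.range_snoc, he, coe_erase, Set.insert_sdiff_singleton,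
        Set.insert_eq_of_mem hv]
    refine ⟨Fin.Embedding.snoc e hve, he', fun i => ?_⟩
    induction i using Fin.lastCases with
    | last =>
      have hall : (Iic (Fin.last k)).image (Fin.Embedding.snoc e hve) = W := by
        rw [← Fin.top_eq_last, Iic_top]
        exact coe_injective (by rw [coe_image, coe_univ, Set.image_univ, he'])
      rw [hall, Fin.Embedding.snoc_last]
      exact ⟨hPv, hQv⟩
    | cast j =>
      rw [← Fin.finsetImage_castSucc_Iic, image_image, Fin.Embedding.snoc_castSucc,
        Fin.Embedding.coe_snoc, Fin.snoc_comp_castSucc]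
      exact hlow j

end TwoTrees

namespace IsTreeMarkov

variable {V : Type*} [Fintype V] [DecidableEq V] {α : V → Type*} [∀ v, Fintype (α v)]
  {T : SimpleGraph V} {R : (∀ v, α v) → ℝ}

theorem marg_mul_marg_eq_of_visibleIn_subset (hT : T.IsTree) (hM : IsTreeMarkov T R)
    {W S : Finset V} {v : V} (hv : v ∈ W) (hvis : hT.visibleIn W v ⊆ S) (hS : S ⊆ W.erase v)
    (x : ∀ v, α v) :
    marg R W (fun u => x u.1) * marg R S (fun u => x u.1) =
      marg R (W.erase v) (fun u => x u.1) * marg R (insert v S) (fun u => x u.1) := by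
  have hsep : ∀ a ∈ ({v} : Finset V), ∀ b ∈ W.erase v \ S, ∀ p : T.Walk a b,
      ∃ s ∈ S, s ∈ p.support := by
    intro a ha b hb p
    obtain rfl := mem_singleton.1 ha
    obtain ⟨⟨hbv, hbW⟩, -⟩ := mem_sdiff.1 hb |>.imp_left mem_erase.1
    obtain ⟨s, hs, hsp⟩ := hT.exists_mem_visibleIn_mem_support_path hbW hbv
    exact ⟨s, hvis hs, hT.support_path_subset p hsp⟩
  have hW : {v} ∪ (W.erase v \ S) ∪ S = W := by
    rw [union_assoc, sdiff_union_of_subset hS, ← insert_eq, insert_erase hv]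
  have key := hM {v} (W.erase v \ S) S hsep x
  rw [hW, ← insert_eq, sdiff_union_of_subset hS] at key
  rw [key, mul_comm]

theorem marg_Iic_mul_marg_eq {n : ℕ} (hT : T.IsTree) (hM : IsTreeMarkov T R) (σ : Fin n ≃ V)
    {i : Fin n} {Par : Finset (Fin n)} (hPar : Par ⊆ Iio i)
    (hvis : hT.visibleIn ((Iic i).image σ) (σ i) ⊆ Par.image σ) (x : ∀ v, α v) :
    marg R ((Iic i).image σ) (fun v => x v.1) * marg R (Par.image σ) (fun v => x v.1) =
      marg R ((Iio i).image σ) (fun v => x v.1) *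
        marg R ((insert i Par).image σ) (fun v => x v.1) := by
  have herase : ((Iic i).image σ).erase (σ i) = (Iio i).image σ := by
    rw [← image_erase σ.injective, Iic_erase]
  rw [image_insert, ← herase]
  exact hM.marg_mul_marg_eq_of_visibleIn_subset hT (mem_image_of_mem σ (mem_Iic.2 le_rfl))
    hvis (herase ▸ image_subset_image hPar) x

end IsTreeMarkov

theorem two_trees_common_factorization_general
    {V : Type*} [Fintype V] [DecidableEq V] (α : V → Type*) [∀ v, Fintype (α v)]
    (TP TQ : SimpleGraph V) (hTP : TP.IsTree) (hTQ : TQ.IsTree)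
    (P Q : (∀ v, α v) → ℝ)
    (hPMarkov : IsTreeMarkov TP P) (hQMarkov : IsTreeMarkov TQ Q)
    {n : ℕ} (hn : n = Fintype.card V) :
    ∃ (σ : Fin n ≃ V) (Par : Fin n → Finset (Fin n)),
      (∀ i : Fin n, Par i ⊆ Finset.Iio i ∧ (Par i).card ≤ 5) ∧
      (∀ i : Fin n, 0 < i.val → ∀ x : ∀ v, α v,
        marg P ((Finset.Iic i).image σ) (fun v => x v.1) *
            marg P ((Par i).image σ) (fun v => x v.1) =
          marg P ((Finset.Iio i).image σ) (fun v => x v.1) *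
            marg P ((insert i (Par i)).image σ) (fun v => x v.1)) ∧
      (∀ i : Fin n, 0 < i.val → ∀ x : ∀ v, α v,
        marg Q ((Finset.Iic i).image σ) (fun v => x v.1) *
            marg Q ((Par i).image σ) (fun v => x v.1) =
          marg Q ((Finset.Iio i).image σ) (fun v => x v.1) *
            marg Q ((insert i (Par i)).image σ) (fun v => x v.1)) := by
  obtain ⟨e, he, hlow⟩ := exists_elimination_order hTP hTQ n univ (by rw [card_univ, hn])
    (by rw [hTP.visibleDegSum_univ, hn]) (by rw [hTQ.visibleDegSum_univ, hn])
  obtain ⟨σ, rfl⟩ : ∃ σ : Fin n ≃ V, σ.toEmbedding = e :=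
    ⟨.ofBijective e ⟨e.injective, Set.range_eq_univ.1 (by simpa using he)⟩, rfl⟩
  simp only [Equiv.coe_toEmbedding] at hlow
  let S i := hTP.visibleIn ((Iic i).image σ) (σ i) ∪ hTQ.visibleIn ((Iic i).image σ) (σ i)
  have hS : ∀ i, S i ⊆ (Iio i).image σ := fun i => by
    rw [← Iic_erase, image_erase σ.injective]
    exact union_subset (hTP.visibleIn_subset_erase _ _) (hTQ.visibleIn_subset_erase _ _)
  have hPar : ∀ i, (S i).image σ.symm ⊆ Iio i := fun i => by
    simpa [image_image] using image_subset_image (f := σ.symm) (hS i)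
  have hPar_image : ∀ i, ((S i).image σ.symm).image σ = S i := fun i => by simp [image_image]
  refine ⟨σ, fun i => (S i).image σ.symm, fun i => ⟨hPar i, ?_⟩, fun i _ x => ?_,
    fun i _ x => ?_⟩
  · have := hlow i
    exact card_image_le.trans ((card_union_le _ _).trans (by omega))
  · exact hPMarkov.marg_Iic_mul_marg_eq hTP σ (hPar i)
      (subset_union_left.trans (hPar_image i).superset) x
  · exact hQMarkov.marg_Iic_mul_marg_eq hTQ σ (hPar i)
      (subset_union_right.trans (hPar_image i).superset) x

/-- **Common factorization for two tree-structured distributions.**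
If `P` and `Q` are joint distributions on the same set of `n` finitely-valued
variables, `P` Markov with respect to a tree `TP` and `Q` Markov with respect to a
(possibly distinct) tree `TQ`, then there is an ordering `σ : Fin n ≃ V` of the nodes
and sets `Par i ⊆ {0,…,i-1}` of cardinality at most `5` such that both `P` and `Q`
factorize along this ordering with conditioning sets `Par i`; the factorization is
expressed equivalently via marginals: for each `i ≠ 0`, the marginal on the first
`i+1` variables times the marginal on `Par i` equals the marginal on the first `i`
variables times the marginal on `{i} ∪ Par i`, pointwise. -/
theorem two_trees_common_factorization
    {V : Type*} [Fintype V] [DecidableEq V] (α : V → Type*) [∀ v, Fintype (α v)]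
    (TP TQ : SimpleGraph V) (hTP : TP.IsTree) (hTQ : TQ.IsTree)
    (P Q : (∀ v, α v) → ℝ)
    (hP0 : ∀ x, 0 ≤ P x) (hP1 : ∑ x, P x = 1)
    (hQ0 : ∀ x, 0 ≤ Q x) (hQ1 : ∑ x, Q x = 1)
    (hPMarkov : IsTreeMarkov TP P) (hQMarkov : IsTreeMarkov TQ Q)
    {n : ℕ} (hn : n = Fintype.card V) :
    ∃ (σ : Fin n ≃ V) (Par : Fin n → Finset (Fin n)),
      (∀ i : Fin n, Par i ⊆ Finset.Iio i ∧ (Par i).card ≤ 5) ∧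
      (∀ i : Fin n, 0 < i.val → ∀ x : ∀ v, α v,
        marg P ((Finset.Iic i).image σ) (fun v => x v.1) *
            marg P ((Par i).image σ) (fun v => x v.1) =
          marg P ((Finset.Iio i).image σ) (fun v => x v.1) *
            marg P ((insert i (Par i)).image σ) (fun v => x v.1)) ∧
      (∀ i : Fin n, 0 < i.val → ∀ x : ∀ v, α v,
        marg Q ((Finset.Iic i).image σ) (fun v => x v.1) *
            marg Q ((Par i).image σ) (fun v => x v.1) =
          marg Q ((Finset.Iio i).image σ) (fun v => x v.1) *
            marg Q ((insert i (Par i)).image σ) (fun v => x v.1)) :=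
  two_trees_common_factorization_general α TP TQ hTP hTQ P Q hPMarkov hQMarkov hn
end

section
/- Let P and Q be product distributions over {0,1}^n, where the i-th coordinate of P is Bernoulli with expectation p_i ∈ [0,1] and the i-th coordinate of Q is Bernoulli with expectation q_i, and suppose 0 < q_i ≤ 1/2 for all i. Then H²(P, Q) ≤ Σ_{i=1}^{n} (p_i − q_i)² / q_i. -/
/-- The product distribution over `{0,1}ⁿ` with Bernoulli parameters `r 0, …, r (n-1)`:
it assigns to `x ∈ {0,1}ⁿ` the probability `∏ i, r i ^ (x i) * (1 - r i) ^ (1 - x i)`. -/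
noncomputable def prodBern {n : ℕ} (r : Fin n → ℝ) : (Fin n → Bool) → ℝ :=
  fun x => ∏ i, if x i then r i else 1 - r i

theorem one_sub_prod_one_sub_le_sum {ι R : Type*} [CommRing R] [LinearOrder R]
    [IsStrictOrderedRing R] (s : Finset ι) {a : ι → R} (h0 : ∀ i ∈ s, 0 ≤ a i)
    (h1 : ∀ i ∈ s, a i ≤ 1) : 1 - ∏ i ∈ s, (1 - a i) ≤ ∑ i ∈ s, a i := by
  induction s using Finset.cons_induction with
  | empty => simp
  | cons j s hj ih =>
    simp only [Finset.forall_mem_cons] at h0 h1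
    rw [Finset.prod_cons, Finset.sum_cons]
    have hP : ∏ i ∈ s, (1 - a i) ≤ 1 :=
      Finset.prod_le_one (fun i hi => sub_nonneg.2 (h1.2 i hi))
        (fun i hi => sub_le_self _ (h0.2 i hi))
    linear_combination ih h0.2 h1.2 + mul_le_of_le_one_right h0.1 hP

section Product

variable {ι : Type*} [Fintype ι] [DecidableEq ι] {α : ι → Type*} [∀ i, Fintype (α i)]
  {p q : ∀ i, α i → ℝ}

theorem sum_sqrt_prod_mul_prod (hp : ∀ i a, 0 ≤ p i a) (hq : ∀ i a, 0 ≤ q i a) :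
    ∑ x : ∀ i, α i, √((∏ i, p i (x i)) * ∏ i, q i (x i)) = ∏ i, ∑ a, √(p i a * q i a) := by
  rw [Fintype.prod_sum]
  refine Fintype.sum_congr _ _ fun x => ?_
  rw [← Finset.prod_mul_distrib, Real.sqrt_prod]
  exact fun i _ => mul_nonneg (hp i _) (hq i _)

theorem sqHellinger_pi (hp : ∀ i a, 0 ≤ p i a) (hq : ∀ i a, 0 ≤ q i a) :
    sqHellinger (fun x : ∀ i, α i => ∏ i, p i (x i)) (fun x => ∏ i, q i (x i)) =
      1 - ∏ i, (1 - sqHellinger (p i) (q i)) := by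
  rw [sqHellinger, sum_sqrt_prod_mul_prod hp hq]
  simp only [sqHellinger, sub_sub_cancel]

end Product

theorem sqHellinger_le_one {α : Type*} [Fintype α] (p q : α → ℝ) : sqHellinger p q ≤ 1 :=
  sub_le_self _ (Finset.sum_nonneg fun _ _ => Real.sqrt_nonneg _)

theorem sq_sqrt_sub_sqrt_le {a b : ℝ} (ha : 0 ≤ a) (hb : 0 < b) :
    (√a - √b) ^ 2 ≤ (a - b) ^ 2 / b := by
  have hb_le : b ≤ (√a + √b) ^ 2 := by
    nlinarith [Real.sq_sqrt hb.le, Real.sqrt_nonneg a, Real.sqrt_nonneg b]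
  rw [le_div_iff₀ hb]
  calc (√a - √b) ^ 2 * b ≤ (√a - √b) ^ 2 * (√a + √b) ^ 2 := by gcongr
    _ = (a - b) ^ 2 := by
      rw [← mul_pow, mul_comm, ← sq_sub_sq, Real.sq_sqrt ha, Real.sq_sqrt hb.le]

noncomputable def bernPMF (r : ℝ) : Bool → ℝ := fun b => if b then r else 1 - r

theorem bernPMF_nonneg {r : ℝ} (h0 : 0 ≤ r) (h1 : r ≤ 1) (b : Bool) : 0 ≤ bernPMF r b := by
  cases b <;> simp [bernPMF, h0, h1]

theorem prodBern_eq_prod {n : ℕ} (r : Fin n → ℝ) :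
    prodBern r = fun x => ∏ i, bernPMF (r i) (x i) :=
  rfl

theorem sqHellinger_bernPMF {p q : ℝ} (hp0 : 0 ≤ p) (hp1 : p ≤ 1) (hq0 : 0 ≤ q) (hq1 : q ≤ 1) :
    sqHellinger (bernPMF p) (bernPMF q) = ((√p - √q) ^ 2 + (√(1 - p) - √(1 - q)) ^ 2) / 2 := by
  rw [sqHellinger, Fintype.sum_bool]
  simp only [bernPMF, if_true, Bool.false_eq_true, if_false]
  rw [Real.sqrt_mul hp0, Real.sqrt_mul (sub_nonneg.2 hp1)]
  have hp := Real.sq_sqrt hp0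
  have hq := Real.sq_sqrt hq0
  have hp' := Real.sq_sqrt (sub_nonneg.2 hp1)
  have hq' := Real.sq_sqrt (sub_nonneg.2 hq1)
  linear_combination (-1 / 2 : ℝ) * (hp + hq + hp' + hq')

theorem sqHellinger_bernPMF_le {p q : ℝ} (hp0 : 0 ≤ p) (hp1 : p ≤ 1) (hq0 : 0 < q)
    (hq : q ≤ 1 / 2) : sqHellinger (bernPMF p) (bernPMF q) ≤ (p - q) ^ 2 / q := by
  have hq1 : 0 < 1 - q := by linarith
  have h_one : (√(1 - p) - √(1 - q)) ^ 2 ≤ (p - q) ^ 2 / q :=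
    calc (√(1 - p) - √(1 - q)) ^ 2 ≤ ((1 - p) - (1 - q)) ^ 2 / (1 - q) :=
          sq_sqrt_sub_sqrt_le (sub_nonneg.2 hp1) hq1
      _ = (p - q) ^ 2 / (1 - q) := by ring
      _ ≤ (p - q) ^ 2 / q := div_le_div_of_nonneg_left (sq_nonneg _) hq0 (by linarith)
  rw [sqHellinger_bernPMF hp0 hp1 hq0.le (by linarith)]
  linarith [sq_sqrt_sub_sqrt_le hp0 hq0]

/-- **Hellinger bound for product distributions over the hypercube.**
If `P` and `Q` are product distributions over `{0,1}ⁿ` with coordinate Bernoulli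
expectations `p i ∈ [0,1]` and `q i ∈ (0, 1/2]`, then
`H²(P,Q) ≤ ∑ i, (p i - q i)² / q i`. -/
theorem sqHellinger_prodBern_le (n : ℕ) (p q : Fin n → ℝ)
    (hp : ∀ i, 0 ≤ p i ∧ p i ≤ 1)
    (hq : ∀ i, 0 < q i ∧ q i ≤ 1 / 2) :
    sqHellinger (prodBern p) (prodBern q) ≤ ∑ i, (p i - q i) ^ 2 / q i := by
  have hq1 : ∀ i, q i ≤ 1 := fun i => (hq i).2.trans (by norm_num)
  rw [prodBern_eq_prod, prodBern_eq_prod,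
    sqHellinger_pi (fun i => bernPMF_nonneg (hp i).1 (hp i).2)
      (fun i => bernPMF_nonneg (hq i).1.le (hq1 i))]
  calc 1 - ∏ i, (1 - sqHellinger (bernPMF (p i)) (bernPMF (q i)))
      ≤ ∑ i, sqHellinger (bernPMF (p i)) (bernPMF (q i)) :=
        one_sub_prod_one_sub_le_sum _
          (fun i _ => by rw [sqHellinger_bernPMF (hp i).1 (hp i).2 (hq i).1.le (hq1 i)]; positivity)
          (fun i _ => sqHellinger_le_one _ _)
    _ ≤ ∑ i, (p i - q i) ^ 2 / q i :=
        Finset.sum_le_sum fun i _ => sqHellinger_bernPMF_le (hp i).1 (hp i).2 (hq i).1 (hq i).2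
end
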